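/- arXiv:2511.07758 — 6 statements merged into one kernel-verified Lean document; each statement's English description precedes it below -/
import Mathlib

section
/- Every 2-connected [4,2]-graph of order at least seven contains either a diamond (K_4 minus an edge) or a house (C_5 plus one chord) as a subgraph. -/
/-!
Suppose a `[4,2]`-graph has no diamond and no house. If it has a triangle `abc`, every other
vertex sees at most one of `a, b, c` (no diamond), and two outside vertices seeing different
corners are non-adjacent (no house). If two such vertices exist, the `[4,2]` condition forces
every further vertex to see no corner, and two of those span a diamond with them. Otherwise two
corners have no outside neighbours, and the `[4,2]` condition makes the (at least four) outside
vertices a clique. If the graph is triangle-free, it has an independent triple; every other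
vertex sees two of its members, so any two other vertices have a common neighbour and are
non-adjacent, giving an independent set of size four.
-/

open SimpleGraph

/-- The number of edges of `G` both of whose endpoints lie in `S`. -/
noncomputable def edgesWithin {V : Type*} (G : SimpleGraph V) (S : Finset V) : ℕ :=
  {e : Sym2 V | e ∈ G.edgeSet ∧ ∀ v ∈ e, v ∈ S}.ncard

/-- `G` is an `[s,t]`-graph: order at least `s`, and every induced subgraph on
`s` vertices has at least `t` edges. -/
def IsSTGraph {V : Type*} [Fintype V] (G : SimpleGraph V) (s t : ℕ) : Prop :=
  s ≤ Fintype.card V ∧ ∀ S : Finset V, S.card = s → t ≤ edgesWithin G S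

/-- `G` is 2-connected: at least 3 vertices, and deleting any single vertex
leaves a connected graph. -/
def TwoConnected {V : Type*} [Fintype V] (G : SimpleGraph V) : Prop :=
  3 ≤ Fintype.card V ∧ ∀ v : V, (G.induce {w : V | w ≠ v}).Connected

/-- The edge `e` lies on a cycle of length `k` in `G`. -/
def EdgeOnCycle {V : Type*} (G : SimpleGraph V) (e : Sym2 V) (k : ℕ) : Prop :=
  ∃ (u : V) (w : G.Walk u u), w.IsCycle ∧ w.length = k ∧ e ∈ w.edges

/-- `G` has a cycle of length `k`. -/
def HasCycleLen {V : Type*} (G : SimpleGraph V) (k : ℕ) : Prop :=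
  ∃ (u : V) (w : G.Walk u u), w.IsCycle ∧ w.length = k

/-- G contains a diamond (K₄ minus an edge) as a subgraph. -/
def HasDiamond {V : Type*} (G : SimpleGraph V) : Prop :=
  ∃ a b c d : V, a ≠ b ∧ a ≠ c ∧ a ≠ d ∧ b ≠ c ∧ b ≠ d ∧ c ≠ d ∧
    G.Adj a b ∧ G.Adj a c ∧ G.Adj a d ∧ G.Adj b c ∧ G.Adj b d

/-- G contains a house (C₅ plus one chord) as a subgraph:
the 5-cycle a b c d e together with the chord a c. -/
def HasHouse {V : Type*} (G : SimpleGraph V) : Prop :=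
  ∃ a b c d e : V, a ≠ b ∧ a ≠ c ∧ a ≠ d ∧ a ≠ e ∧ b ≠ c ∧ b ≠ d ∧ b ≠ e ∧
    c ≠ d ∧ c ≠ e ∧ d ≠ e ∧
    G.Adj a b ∧ G.Adj b c ∧ G.Adj c d ∧ G.Adj d e ∧ G.Adj e a ∧ G.Adj a c

open Finset

lemma Finset.exists_four_of_four_le_card {α : Type*} [DecidableEq α] {s : Finset α}
    (hs : 4 ≤ s.card) :
    ∃ a ∈ s, ∃ b ∈ s, ∃ c ∈ s, ∃ d ∈ s, a ≠ b ∧ a ≠ c ∧ a ≠ d ∧ b ≠ c ∧ b ≠ d ∧ c ≠ d := by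
  obtain ⟨a, ha⟩ := card_pos.1 (by omega : 0 < s.card)
  obtain ⟨b, c, d, hb, hc, hd, hbc, hbd, hcd⟩ :=
    two_lt_card_iff.1 (by rw [card_erase_of_mem ha]; omega : 2 < (s.erase a).card)
  simp only [mem_erase] at hb hc hd
  exact ⟨a, ha, b, hb.2, c, hc.2, d, hd.2, hb.1.symm, hc.1.symm, hd.1.symm, hbc, hbd, hcd⟩

section

variable {V : Type*} {G : SimpleGraph V}

lemma hasDiamond_of_adj {a b c x : V} (hab : G.Adj a b) (hbc : G.Adj b c) (hac : G.Adj a c)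
    (hxa : G.Adj x a) (hxb : G.Adj x b) (hxc : x ≠ c) : HasDiamond G :=
  ⟨a, b, c, x, hab.ne, hac.ne, hxa.ne', hbc.ne, hxb.ne', hxc.symm, hab, hac, hxa.symm, hbc,
    hxb.symm⟩

lemma hasDiamond_of_isClique {s : Finset V} (hs : G.IsClique (s : Set V)) (h4 : 4 ≤ s.card) :
    HasDiamond G := by
  classical
  obtain ⟨a, ha, b, hb, c, hc, d, hd, hab, hac, had, hbc, hbd, hcd⟩ :=
    exists_four_of_four_le_card h4
  exact ⟨a, b, c, d, hab, hac, had, hbc, hbd, hcd, hs ha hb hab, hs ha hc hac, hs ha hd had,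
    hs hb hc hbc, hs hb hd hbd⟩

lemma hasHouse_of_adj {a b c x y : V} (hab : G.Adj a b) (hbc : G.Adj b c) (hac : G.Adj a c)
    (hxa : G.Adj x a) (hyc : G.Adj y c) (hxy : G.Adj x y)
    (hxb : x ≠ b) (hxc : x ≠ c) (hya : y ≠ a) (hyb : y ≠ b) : HasHouse G :=
  ⟨a, b, c, y, x, hab.ne, hac.ne, hya.symm, hxa.ne', hbc.ne, hyb.symm, hxb.symm, hyc.ne',
    hxc.symm, hxy.ne', hab, hbc, hyc.symm, hxy.symm, hxa, hac⟩

variable [Fintype V]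

lemma IsSTGraph.exists_adj_ne (h42 : IsSTGraph G 4 2) {S : Finset V} (hS : S.card = 4)
    (e : Sym2 V) : ∃ x ∈ S, ∃ y ∈ S, G.Adj x y ∧ s(x, y) ≠ e := by
  by_contra! h
  have hsub : {f : Sym2 V | f ∈ G.edgeSet ∧ ∀ v ∈ f, v ∈ S} ⊆ {e} := by
    rintro ⟨x, y⟩ ⟨hxy, hmem⟩
    exact h x (hmem x (Sym2.mem_mk_left x y)) y (hmem y (Sym2.mem_mk_right x y)) hxy
  have h2 := h42.2 S hS
  have h1 := Set.ncard_le_ncard hsub (Set.finite_singleton e)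
  rw [Set.ncard_singleton] at h1
  unfold edgesWithin at h2
  omega

lemma IsSTGraph.adj_of_not_adj_pair (h42 : IsSTGraph G 4 2) {p q u v : V}
    (hpq : p ≠ q) (hpu : p ≠ u) (hpv : p ≠ v) (hqu : q ≠ u) (hqv : q ≠ v) (huv : u ≠ v)
    (hup : ¬G.Adj u p) (huq : ¬G.Adj u q) (hvp : ¬G.Adj v p) (hvq : ¬G.Adj v q) :
    G.Adj u v := by
  classical
  obtain ⟨x, hx, y, hy, hxy, hne⟩ :=
    h42.exists_adj_ne (S := {p, q, u, v}) (by simp [card_insert_of_notMem, *]) s(p, q)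
  simp only [mem_insert, mem_singleton] at hx hy
  rcases hx with rfl | rfl | rfl | rfl <;> rcases hy with rfl | rfl | rfl | rfl <;>
    simp_all [adj_comm, Sym2.eq_swap]

lemma IsSTGraph.isClique_setOf_not_adj (h42 : IsSTGraph G 4 2) {p q : V} (hpq : p ≠ q) :
    G.IsClique {u | u ≠ p ∧ u ≠ q ∧ ¬G.Adj u p ∧ ¬G.Adj u q} :=
  fun _ ⟨hup, huq, hup', huq'⟩ _ ⟨hvp, hvq, hvp', hvq'⟩ huv =>
    h42.adj_of_not_adj_pair hpq hup.symm hvp.symm huq.symm hvq.symm huv hup' huq' hvp' hvq'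

lemma IsSTGraph.adj_or_adj_of_not_adj (h42 : IsSTGraph G 4 2) {x y z w : V}
    (hxy : x ≠ y) (hxz : x ≠ z) (hyz : y ≠ z) (hwx : w ≠ x) (hwy : w ≠ y) (hwz : w ≠ z)
    (nxy : ¬G.Adj x y) (nxz : ¬G.Adj x z) (nyz : ¬G.Adj y z) : G.Adj w x ∨ G.Adj w y := by
  by_contra! h
  exact nxy (h42.adj_of_not_adj_pair hwz.symm hxz.symm hyz.symm hwx hwy hxy nxz
    (fun h' => h.1 h'.symm) nyz (fun h' => h.2 h'.symm))

lemma exists_indep_triple_of_cliqueFree_three (h3 : G.CliqueFree 3) (hn : 6 ≤ Fintype.card V) :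
    ∃ a b c : V, a ≠ b ∧ a ≠ c ∧ b ≠ c ∧ ¬G.Adj a b ∧ ¬G.Adj a c ∧ ¬G.Adj b c := by
  classical
  by_contra! hno
  have tri {x y z : V} (hxy : G.Adj x y) (hxz : G.Adj x z) (hyz : G.Adj y z) : False :=
    h3 _ (is3Clique_triple_iff.2 ⟨hxy, hxz, hyz⟩)
  obtain ⟨v⟩ : Nonempty V := Fintype.card_pos_iff.1 (by omega)
  by_cases hdeg : 2 < (G.neighborFinset v).card
  · obtain ⟨a, b, c, ha, hb, hc, hab, hac, hbc⟩ := two_lt_card_iff.1 hdeg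
    rw [mem_neighborFinset] at ha hb hc
    exact tri hb hc (hno a b c hab hac hbc (fun h => tri ha hb h) (fun h => tri ha hc h))
  · have : 2 < (univ \ insert v (G.neighborFinset v)).card := by
      have := card_insert_le v (G.neighborFinset v)
      rw [card_sdiff_of_subset (subset_univ _), card_univ]
      omega
    obtain ⟨a, b, c, ha, hb, hc, hab, hac, hbc⟩ := two_lt_card_iff.1 this
    simp only [mem_sdiff, mem_univ, mem_insert, mem_neighborFinset, true_and, not_or] at ha hb hc
    exact tri (hno v a b (Ne.symm ha.1) (Ne.symm hb.1) hab ha.2 hb.2)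
      (hno v a c (Ne.symm ha.1) (Ne.symm hc.1) hac ha.2 hc.2)
      (hno v b c (Ne.symm hb.1) (Ne.symm hc.1) hbc hb.2 hc.2)

lemma IsSTGraph.card_lt_four_of_isIndepSet (h42 : IsSTGraph G 4 2) {s : Finset V}
    (hs : G.IsIndepSet (s : Set V)) : s.card < 4 := by
  classical
  by_contra! h4
  obtain ⟨a, ha, b, hb, c, hc, d, hd, hab, hac, had, hbc, hbd, hcd⟩ :=
    exists_four_of_four_le_card h4
  exact hs hc hd hcd (h42.adj_of_not_adj_pair hab hac had hbc hbd hcd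
    (hs hc ha hac.symm) (hs hc hb hbc.symm) (hs hd ha had.symm) (hs hd hb hbd.symm))

lemma IsSTGraph.not_cliqueFree_three (h42 : IsSTGraph G 4 2) (hn : 7 ≤ Fintype.card V) :
    ¬G.CliqueFree 3 := by
  classical
  intro h3
  obtain ⟨a, b, c, hab, hac, hbc, nab, nac, nbc⟩ :=
    exists_indep_triple_of_cliqueFree_three h3 (by omega)
  set W := ({a, b, c} : Finset V)ᶜ
  have memW {w : V} : w ∈ W ↔ w ≠ a ∧ w ≠ b ∧ w ≠ c := by simp [W]
  have hW : 4 ≤ W.card := by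
    have := card_le_three (a := a) (b := b) (c := c)
    rw [card_compl]
    omega
  have sees : ∀ w ∈ W,
      (G.Adj w a ∨ G.Adj w b) ∧ (G.Adj w a ∨ G.Adj w c) ∧ (G.Adj w b ∨ G.Adj w c) := by
    intro w hw
    obtain ⟨hwa, hwb, hwc⟩ := memW.1 hw
    exact ⟨h42.adj_or_adj_of_not_adj hab hac hbc hwa hwb hwc nab nac nbc,
      h42.adj_or_adj_of_not_adj hac hab hbc.symm hwa hwc hwb nac nab (nbc ·.symm),
      h42.adj_or_adj_of_not_adj hbc hab.symm hac.symm hwb hwc hwa nbc (nab ·.symm) (nac ·.symm)⟩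
  refine (h42.card_lt_four_of_isIndepSet (s := W) ?_).not_ge hW
  intro u hu v hv _ huv
  obtain ⟨t, hut, hvt⟩ : ∃ t, G.Adj u t ∧ G.Adj v t := by
    have := sees u hu
    have := sees v hv
    grind
  exact h3 _ (is3Clique_triple_iff.2 ⟨huv, hut, hvt⟩)

lemma IsSTGraph.not_adj_of_adj_of_adj (h42 : IsSTGraph G 4 2) (hd : ¬HasDiamond G)
    (hh : ¬HasHouse G) {p q r x y w : V} (hpq : G.Adj p q) (hqr : G.Adj q r) (hpr : G.Adj p r)
    (hxp : G.Adj x p) (hyq : G.Adj y q) (hxq : x ≠ q) (hxr : x ≠ r) (hyp : y ≠ p) (hyr : y ≠ r)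
    (hwp : w ≠ p) (hwq : w ≠ q) (hwr : w ≠ r) (hxw : x ≠ w) (hyw : y ≠ w) :
    ¬G.Adj w p ∧ ¬G.Adj w q ∧ ¬G.Adj w r := by
  have nxq : ¬G.Adj x q := fun h => hd (hasDiamond_of_adj hpq hqr hpr hxp h hxr)
  have nxr : ¬G.Adj x r := fun h => hd (hasDiamond_of_adj hpr hqr.symm hpq hxp h hxq)
  have nyp : ¬G.Adj y p := fun h => hd (hasDiamond_of_adj hpq hqr hpr h hyq hyr)
  have nyr : ¬G.Adj y r := fun h => hd (hasDiamond_of_adj hqr hpr.symm hpq.symm hyq h hyp)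
  have nxy : ¬G.Adj x y := fun h => hh (hasHouse_of_adj hpr hqr.symm hpq hxp hyq h hxr hxq hyp hyr)
  have hxy : x ≠ y := by rintro rfl; exact nxq hyq
  refine ⟨fun hwp' => ?_, fun hwq' => ?_, fun hwr' => ?_⟩
  · -- then `{x, w, y, r}` spans only the edge `xw`
    have nwy : ¬G.Adj w y := fun h =>
      hh (hasHouse_of_adj hpr hqr.symm hpq hwp' hyq h hwr hwq hyp hyr)
    have nwr : ¬G.Adj w r := fun h => hd (hasDiamond_of_adj hpr hqr.symm hpq hwp' h hwq)
    exact nyr (h42.adj_of_not_adj_pair hxw hxy hxr hyw.symm hwr hyr (nxy ·.symm) (nwy ·.symm)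
      (nxr ·.symm) (nwr ·.symm))
  · -- then `{y, w, x, r}` spans only the edge `yw`
    have nwx : ¬G.Adj w x := fun h =>
      hh (hasHouse_of_adj hqr hpr.symm hpq.symm hwq' hxp h hwr hwp hxq hxr)
    have nwr : ¬G.Adj w r := fun h => hd (hasDiamond_of_adj hqr hpr.symm hpq.symm hwq' h hwp)
    exact nxr (h42.adj_of_not_adj_pair hyw hxy.symm hyr hxw.symm hwr hxr nxy (nwx ·.symm)
      (nyr ·.symm) (nwr ·.symm))
  · -- then `{p, x, y, w}` spans only the edge `px`
    have nwx : ¬G.Adj w x := fun h =>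
      hh (hasHouse_of_adj hqr.symm hpq.symm hpr.symm hwr' hxp h hwq hwp hxr hxq)
    have nwy : ¬G.Adj w y := fun h =>
      hh (hasHouse_of_adj hpr.symm hpq hqr.symm hwr' hyq h hwp hwq hyr hyp)
    have nwp : ¬G.Adj w p := fun h => hd (hasDiamond_of_adj hpr hqr.symm hpq h hwr' hwq)
    exact nwy (h42.adj_of_not_adj_pair hxp.ne' hwp.symm hyp.symm hxw hxy hyw.symm nwp nwx nyp
      (nxy ·.symm))

lemma IsSTGraph.hasDiamond_of_adj_of_adj (h42 : IsSTGraph G 4 2) (hn : 7 ≤ Fintype.card V)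
    (hh : ¬HasHouse G) {p q r x y : V} (hpq : G.Adj p q) (hqr : G.Adj q r) (hpr : G.Adj p r)
    (hxp : G.Adj x p) (hyq : G.Adj y q) (hxq : x ≠ q) (hxr : x ≠ r) (hyp : y ≠ p) (hyr : y ≠ r) :
    HasDiamond G := by
  classical
  by_contra hd
  have nxq : ¬G.Adj x q := fun h => hd (hasDiamond_of_adj hpq hqr hpr hxp h hxr)
  have nxr : ¬G.Adj x r := fun h => hd (hasDiamond_of_adj hpr hqr.symm hpq hxp h hxq)
  have nyp : ¬G.Adj y p := fun h => hd (hasDiamond_of_adj hpq hqr hpr h hyq hyr)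
  have nyr : ¬G.Adj y r := fun h => hd (hasDiamond_of_adj hqr hpr.symm hpq.symm hyq h hyp)
  have hxy : x ≠ y := by rintro rfl; exact nxq hyq
  have hout : 1 < ({p, q, r, x, y} : Finset V)ᶜ.card := by
    have := card_le_five (a := p) (b := q) (c := r) (d := x) (e := y)
    rw [card_compl]
    omega
  obtain ⟨w, w', hw, hw', hww'⟩ := one_lt_card_iff.1 hout
  simp only [mem_compl, mem_insert, mem_singleton, not_or, ← ne_eq] at hw hw'
  obtain ⟨hwp, hwq, hwr, hwx, hwy⟩ := hw
  obtain ⟨hw'p, hw'q, hw'r, hw'x, hw'y⟩ := hw'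
  obtain ⟨nwp, nwq, nwr⟩ := h42.not_adj_of_adj_of_adj hd hh hpq hqr hpr hxp hyq hxq hxr hyp hyr
    hwp hwq hwr (Ne.symm hwx) (Ne.symm hwy)
  obtain ⟨nw'p, nw'q, nw'r⟩ := h42.not_adj_of_adj_of_adj hd hh hpq hqr hpr hxp hyq hxq hxr hyp
    hyr hw'p hw'q hw'r (Ne.symm hw'x) (Ne.symm hw'y)
  exact hd ⟨w, w', x, y, hww', hwx, hwy, hw'x, hw'y, hxy,
    h42.adj_of_not_adj_pair hpq.ne hwp.symm hw'p.symm hwq.symm hw'q.symm hww' nwp nwq nw'p nw'q,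
    h42.adj_of_not_adj_pair hqr.ne hwq.symm hxq.symm hwr.symm hxr.symm hwx nwq nwr nxq nxr,
    h42.adj_of_not_adj_pair hpr.ne hwp.symm hyp.symm hwr.symm hyr.symm hwy nwp nwr nyp nyr,
    h42.adj_of_not_adj_pair hqr.ne hw'q.symm hxq.symm hw'r.symm hxr.symm hw'x nw'q nw'r nxq nxr,
    h42.adj_of_not_adj_pair hpr.ne hw'p.symm hyp.symm hw'r.symm hyr.symm hw'y nw'p nw'r nyp nyr⟩

lemma IsSTGraph.exists_adj_forall_not_adj (h42 : IsSTGraph G 4 2) (hn : 7 ≤ Fintype.card V)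
    (hd : ¬HasDiamond G) (hh : ¬HasHouse G) {a b c : V} (hab : G.Adj a b) (hbc : G.Adj b c)
    (hac : G.Adj a c) :
    ∃ p q, G.Adj p q ∧ ∀ w, w ≠ a → w ≠ b → w ≠ c → ¬G.Adj w p ∧ ¬G.Adj w q := by
  by_cases hA : ∃ x, x ≠ b ∧ x ≠ c ∧ G.Adj x a
  · obtain ⟨x, hxb, hxc, hxa⟩ := hA
    by_cases hB : ∃ y, y ≠ a ∧ y ≠ c ∧ G.Adj y b
    · obtain ⟨y, hya, hyc, hyb⟩ := hB
      exact (hd (h42.hasDiamond_of_adj_of_adj hn hh hab hbc hac hxa hyb hxb hxc hya hyc)).elim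
    by_cases hC : ∃ y, y ≠ a ∧ y ≠ b ∧ G.Adj y c
    · obtain ⟨y, hya, hyb, hyc⟩ := hC
      exact (hd (h42.hasDiamond_of_adj_of_adj hn hh hac hbc.symm hab hxa hyc hxc hxb hya hyb)).elim
    push Not at hB hC
    exact ⟨b, c, hbc, fun w hwa hwb hwc => ⟨hB w hwa hwc, hC w hwa hwb⟩⟩
  by_cases hB : ∃ x, x ≠ a ∧ x ≠ c ∧ G.Adj x b
  · obtain ⟨x, hxa, hxc, hxb⟩ := hB
    by_cases hC : ∃ y, y ≠ a ∧ y ≠ b ∧ G.Adj y c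
    · obtain ⟨y, hya, hyb, hyc⟩ := hC
      exact (hd (h42.hasDiamond_of_adj_of_adj hn hh hbc hac.symm hab.symm hxb hyc hxc hxa hyb
        hya)).elim
    push Not at hA hC
    exact ⟨a, c, hac, fun w hwa hwb hwc => ⟨hA w hwb hwc, hC w hwa hwb⟩⟩
  push Not at hA hB
  exact ⟨a, b, hab, fun w hwa hwb hwc => ⟨hA w hwb hwc, hB w hwa hwc⟩⟩

lemma IsSTGraph.hasDiamond_of_adj_of_not_hasHouse (h42 : IsSTGraph G 4 2)
    (hn : 7 ≤ Fintype.card V) (hh : ¬HasHouse G) {a b c : V} (hab : G.Adj a b)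
    (hbc : G.Adj b c) (hac : G.Adj a c) : HasDiamond G := by
  classical
  by_contra hd
  obtain ⟨p, q, hpq, hout⟩ := h42.exists_adj_forall_not_adj hn hd hh hab hbc hac
  have hW : 4 ≤ ({a, b, c} : Finset V)ᶜ.card := by
    have := card_le_three (a := a) (b := b) (c := c)
    rw [card_compl]
    omega
  refine hd (hasDiamond_of_isClique ((h42.isClique_setOf_not_adj hpq.ne).subset ?_) hW)
  intro w hw
  simp only [coe_compl, coe_insert, coe_singleton, Set.mem_compl_iff, Set.mem_insert_iff,
    Set.mem_singleton_iff, not_or] at hw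
  obtain ⟨nwp, nwq⟩ := hout w hw.1 hw.2.1 hw.2.2
  exact ⟨fun h => nwq (h ▸ hpq), fun h => nwp (h ▸ hpq.symm), nwp, nwq⟩

end

theorem stmt_2_general {V : Type*} [Fintype V] (G : SimpleGraph V)
    (h42 : IsSTGraph G 4 2) (hn : 7 ≤ Fintype.card V) :
    HasDiamond G ∨ HasHouse G := by
  classical
  obtain ⟨s, hs⟩ : ∃ s, G.IsNClique 3 s := by
    simpa [CliqueFree] using h42.not_cliqueFree_three hn
  obtain ⟨a, b, c, hab, hac, hbc, -⟩ := is3Clique_iff.1 hs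
  exact or_iff_not_imp_right.2 fun hh => h42.hasDiamond_of_adj_of_not_hasHouse hn hh hab hbc hac

/-- Every 2-connected [4,2]-graph of order at least seven contains a diamond or a house. -/
theorem stmt_2 {V : Type*} [Fintype V] (G : SimpleGraph V)
    (h42 : IsSTGraph G 4 2) (h2c : TwoConnected G) (hn : 7 ≤ Fintype.card V) :
    HasDiamond G ∨ HasHouse G :=
  stmt_2_general G h42 hn
end

section
/- If G is a nonbipartite graph of order n with more than (n−1)²/4 + 1 edges, then G contains a triangle. -/
open SimpleGraph

section PW
variable {V : Type*}

/-- A pseudo-walk of length `n` from `u` to `v`: a function giving consecutive adjacent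
vertices. -/
def PW (G : SimpleGraph V) (u v : V) (n : ℕ) : Prop :=
  ∃ c : ℕ → V, c 0 = u ∧ c n = v ∧ ∀ i < n, G.Adj (c i) (c (i + 1))

lemma pw_refl (G : SimpleGraph V) (u : V) : PW G u u 0 :=
  ⟨fun _ => u, rfl, rfl, fun i hi => absurd hi (by omega)⟩

lemma pw_single {G : SimpleGraph V} {u v : V} (h : G.Adj u v) : PW G u v 1 :=
  ⟨fun t => if t = 0 then u else v, by simp, by simp, by
    intro i hi
    have : i = 0 := by omega
    subst this; simpa using h⟩

lemma pw_append {G : SimpleGraph V} {u v w : V} {a b : ℕ}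
    (h1 : PW G u v a) (h2 : PW G v w b) : PW G u w (a + b) := by
  obtain ⟨c1, hc10, hc1a, hadj1⟩ := h1
  obtain ⟨c2, hc20, hc2b, hadj2⟩ := h2
  refine ⟨fun t => if t < a then c1 t else c2 (t - a), ?_, ?_, ?_⟩
  · by_cases h : 0 < a
    · simpa [h] using hc10
    · have : a = 0 := by omega
      subst this
      simpa using hc20.trans (hc1a ▸ hc10)
  · have : ¬ (a + b < a) := by omega
    simp only [this, if_false, Nat.add_sub_cancel_left, hc2b]
  · intro i hi
    simp only []
    by_cases h1' : i + 1 < a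
    · have h0 : i < a := by omega
      rw [if_pos h0, if_pos h1']
      exact hadj1 i h0
    · by_cases h0 : i < a
      · have h3 : i + 1 = a := by omega
        rw [if_pos h0, if_neg h1', h3, Nat.sub_self, hc20, ← hc1a, ← h3]
        exact hadj1 i h0
      · have hi' : ¬ i + 1 < a := by omega
        rw [if_neg h0, if_neg hi']
        have h4 : i + 1 - a = (i - a) + 1 := by omega
        rw [h4]
        exact hadj2 (i - a) (by omega)

lemma pw_reverse {G : SimpleGraph V} {u v : V} {n : ℕ} (h : PW G u v n) : PW G v u n := by
  obtain ⟨c, hc0, hcn, hadj⟩ := h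
  refine ⟨fun t => c (n - t), by simpa using hcn, by simpa using hc0, ?_⟩
  intro i hi
  show G.Adj (c (n - i)) (c (n - (i + 1)))
  have h1 : n - i - 1 + 1 = n - i := by omega
  have h2 : n - (i + 1) = n - i - 1 := by omega
  rw [h2]
  have := hadj (n - i - 1) (by omega)
  rw [h1] at this
  exact this.symm

lemma pw_of_walk {G : SimpleGraph V} {u v : V} (w : G.Walk u v) : PW G u v w.length :=
  ⟨w.getVert, w.getVert_zero, w.getVert_length, fun i hi => w.adj_getVert_succ hi⟩

end PW

lemma exists_odd_closed {V : Type*} (G : SimpleGraph V)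
    (hnb : ¬ ∃ A : Set V, (∀ a ∈ A, ∀ b ∈ A, ¬ G.Adj a b) ∧
      (∀ a ∈ Aᶜ, ∀ b ∈ Aᶜ, ¬ G.Adj a b)) :
    ∃ n, Odd n ∧ ∃ u, PW G u u n := by
  by_contra hodd
  push_neg at hodd
  apply hnb
  classical
  let rep : V → V := fun v => (G.connectedComponentMk v).out
  have hrep_adj : ∀ a b : V, G.Adj a b → rep a = rep b := by
    intro a b hab
    show (G.connectedComponentMk a).out = (G.connectedComponentMk b).out
    rw [ConnectedComponent.connectedComponentMk_eq_of_adj hab]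
  have hreach : ∀ v : V, ∃ k, PW G (rep v) v k := by
    intro v
    have h1 : G.connectedComponentMk ((G.connectedComponentMk v).out) =
        G.connectedComponentMk v := (G.connectedComponentMk v).out_eq
    obtain ⟨w⟩ := ConnectedComponent.exact h1
    exact ⟨w.length, pw_of_walk w⟩
  refine ⟨{v | ∃ n, Even n ∧ PW G (rep v) v n}, ?_, ?_⟩
  · rintro a ⟨n₁, he₁, p₁⟩ b ⟨n₂, he₂, p₂⟩ hab
    have hr : rep a = rep b := hrep_adj a b hab
    have pclosed : PW G (rep a) (rep a) (n₁ + 1 + n₂) := by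
      refine pw_append (pw_append p₁ (pw_single hab)) ?_
      rw [hr]
      exact pw_reverse p₂
    refine hodd (n₁ + 1 + n₂) ?_ (rep a) pclosed
    rcases he₁ with ⟨x, hx⟩
    rcases he₂ with ⟨y, hy⟩
    exact ⟨x + y, by omega⟩
  · rintro a ha b hb hab
    simp only [Set.mem_compl_iff, Set.mem_setOf_eq] at ha hb
    push_neg at ha hb
    obtain ⟨k, pk⟩ := hreach a
    have hk : ¬ Even k := fun he => ha k he pk
    have : PW G (rep b) b (k + 1) := by
      rw [← hrep_adj a b hab]
      exact pw_append pk (pw_single hab)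
    exact hb (k + 1) (by rw [Nat.even_add_one]; exact hk) this

lemma mantel_aux {V : Type*} [Fintype V] [DecidableEq V] (G : SimpleGraph V)
    [DecidableRel G.Adj]
    (tri : ∀ a b c : V, G.Adj a b → G.Adj b c → G.Adj c a → False) :
    ∀ (N : ℕ) (T : Finset V), T.card ≤ N →
      4 * (G.edgeFinset ∩ T.sym2).card ≤ T.card ^ 2 := by
  intro N
  induction N with
  | zero =>
    intro T hT
    have : T = ∅ := Finset.card_eq_zero.mp (by omega)
    subst this
    simp
  | succ N ih =>
    intro T hT
    rcases Nat.lt_or_ge T.card (N + 1) with hlt | hge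
    · exact ih T (by omega)
    have hTc : T.card = N + 1 := by omega
    by_cases hE : (G.edgeFinset ∩ T.sym2) = ∅
    · rw [hE]; simp
    obtain ⟨u, v, he⟩ : ∃ u v, s(u, v) ∈ G.edgeFinset ∩ T.sym2 := by
      obtain ⟨e, he⟩ := Finset.nonempty_of_ne_empty hE
      induction e using Sym2.ind with
      | _ u v => exact ⟨u, v, he⟩
    rw [Finset.mem_inter, mem_edgeFinset, mem_edgeSet] at he
    obtain ⟨huv, hmem⟩ := he
    have hu : u ∈ T := (Finset.mk_mem_sym2_iff.mp hmem).1
    have hv : v ∈ T := (Finset.mk_mem_sym2_iff.mp hmem).2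
    have hne : u ≠ v := huv.ne
    set T' : Finset V := T \ {u, v} with hT'def
    have hsub : ({u, v} : Finset V) ⊆ T := by
      intro x hx
      rcases Finset.mem_insert.mp hx with rfl | hx
      · exact hu
      · rw [Finset.mem_singleton] at hx; subst hx; exact hv
    have hcard2 : ({u, v} : Finset V).card = 2 := by
      rw [Finset.card_insert_of_notMem (by simpa using hne), Finset.card_singleton]
    have hT'card : T'.card = T.card - 2 := by
      rw [hT'def, Finset.card_sdiff_of_subset hsub, hcard2]
    -- neighbor sets
    set Au : Finset V := T.filter (G.Adj u) with hAu
    set Av : Finset V := T.filter (G.Adj v) with hAv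
    have hdisj : Disjoint Au Av := by
      rw [Finset.disjoint_left]
      intro w hwu hwv
      rw [hAu, Finset.mem_filter] at hwu
      rw [hAv, Finset.mem_filter] at hwv
      exact tri u w v hwu.2 hwv.2.symm huv.symm
    have hAuv : Au.card + Av.card ≤ T.card := by
      rw [← Finset.card_union_of_disjoint hdisj]
      exact Finset.card_le_card (Finset.union_subset (Finset.filter_subset _ _)
        (Finset.filter_subset _ _))
    have hvAu : v ∈ Au := by rw [hAu, Finset.mem_filter]; exact ⟨hv, huv⟩
    -- the key covering
    have hcover : (G.edgeFinset ∩ T.sym2) ⊆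
        (G.edgeFinset ∩ T'.sym2) ∪ (Au.erase v).image (fun w => s(u, w))
          ∪ Av.image (fun w => s(v, w)) := by
      intro f hf
      obtain ⟨x, y, rfl⟩ : ∃ x y, f = s(x, y) := by
        induction f using Sym2.ind with
        | _ x y => exact ⟨x, y, rfl⟩
      rw [Finset.mem_inter, mem_edgeFinset, mem_edgeSet] at hf
      obtain ⟨hxy, hxyT⟩ := hf
      have hx : x ∈ T := (Finset.mk_mem_sym2_iff.mp hxyT).1
      have hy : y ∈ T := (Finset.mk_mem_sym2_iff.mp hxyT).2
      by_cases hvf : x = v ∨ y = v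
      · apply Finset.mem_union_right
        rcases hvf with rfl | rfl
        · refine Finset.mem_image.mpr ⟨y, ?_, rfl⟩
          rw [hAv, Finset.mem_filter]
          exact ⟨hy, hxy⟩
        · refine Finset.mem_image.mpr ⟨x, ?_, Sym2.eq_swap⟩
          rw [hAv, Finset.mem_filter]
          exact ⟨hx, hxy.symm⟩
      push_neg at hvf
      by_cases huf : x = u ∨ y = u
      · apply Finset.mem_union_left
        apply Finset.mem_union_right
        rcases huf with rfl | rfl
        · refine Finset.mem_image.mpr ⟨y, Finset.mem_erase.mpr ⟨hvf.2, ?_⟩, rfl⟩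
          rw [hAu, Finset.mem_filter]
          exact ⟨hy, hxy⟩
        · refine Finset.mem_image.mpr ⟨x, Finset.mem_erase.mpr ⟨hvf.1, ?_⟩, Sym2.eq_swap⟩
          rw [hAu, Finset.mem_filter]
          exact ⟨hx, hxy.symm⟩
      push_neg at huf
      apply Finset.mem_union_left
      apply Finset.mem_union_left
      rw [Finset.mem_inter, mem_edgeFinset, mem_edgeSet]
      refine ⟨hxy, Finset.mk_mem_sym2_iff.mpr ⟨?_, ?_⟩⟩
      · rw [hT'def, Finset.mem_sdiff]
        exact ⟨hx, by simp [huf.1, hvf.1]⟩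
      · rw [hT'def, Finset.mem_sdiff]
        exact ⟨hy, by simp [huf.2, hvf.2]⟩
    have hkey : (G.edgeFinset ∩ T.sym2).card ≤
        (G.edgeFinset ∩ T'.sym2).card + (T.card - 1) := by
      calc (G.edgeFinset ∩ T.sym2).card
          ≤ ((G.edgeFinset ∩ T'.sym2) ∪ (Au.erase v).image (fun w => s(u, w))
              ∪ Av.image (fun w => s(v, w))).card := Finset.card_le_card hcover
        _ ≤ (G.edgeFinset ∩ T'.sym2).card + (Au.erase v).card + Av.card := by
            refine le_trans (Finset.card_union_le _ _) ?_
            have := Finset.card_union_le (G.edgeFinset ∩ T'.sym2)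
              ((Au.erase v).image (fun w => s(u, w)))
            have h1 := Finset.card_image_le (s := Au.erase v) (f := fun w => s(u, w))
            have h2 := Finset.card_image_le (s := Av) (f := fun w => s(v, w))
            omega
        _ ≤ (G.edgeFinset ∩ T'.sym2).card + (T.card - 1) := by
            have h3 : (Au.erase v).card = Au.card - 1 := Finset.card_erase_of_mem hvAu
            have h4 : 1 ≤ Au.card := Finset.card_pos.mpr ⟨v, hvAu⟩
            omega
    have hTge2 : 2 ≤ T.card := by
      have : ({u, v} : Finset V).card ≤ T.card := Finset.card_le_card hsub
      omega
    obtain ⟨k, hk⟩ : ∃ k, T.card = k + 2 := ⟨T.card - 2, by omega⟩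
    have ihT' := ih T' (by omega)
    have h5 : T'.card = k := by omega
    rw [h5] at ihT'
    have h6 : T.card - 1 = k + 1 := by omega
    rw [h6] at hkey
    rw [hk]
    nlinarith [hkey, ihT']

lemma double_count {α β : Type*} (A : Finset α) (B : Finset β) (r : α → β → Prop)
    [∀ a b, Decidable (r a b)] :
    ∑ a ∈ A, (B.filter (fun b => r a b)).card = ∑ b ∈ B, (A.filter (fun a => r a b)).card := by
  simp_rw [Finset.card_filter]
  exact Finset.sum_comm

theorem stmt_8' {V : Type*} [Fintype V] (G : SimpleGraph V)
    (hnb : ¬ ∃ A : Set V, (∀ a ∈ A, ∀ b ∈ A, ¬ G.Adj a b) ∧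
      (∀ a ∈ Aᶜ, ∀ b ∈ Aᶜ, ¬ G.Adj a b))
    (hsize : ((Fintype.card V : ℝ) - 1) ^ 2 / 4 + 1 < (G.edgeSet.ncard : ℝ)) :
    ∃ (u : V) (w : G.Walk u u), w.IsCycle ∧ w.length = 3 := by
  classical
  by_contra hT
  have tri : ∀ a b c : V, G.Adj a b → G.Adj b c → G.Adj c a → False := by
    intro a b c hab hbc hca
    exact hT (SimpleGraph.is3Clique_iff_exists_cycle_length_three.mp
      ⟨{a, b, c}, SimpleGraph.is3Clique_triple_iff.mpr ⟨hab, hca.symm, hbc⟩⟩)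
  obtain ⟨n₀, hodd₀, hex₀⟩ := exists_odd_closed G hnb
  have hPex : ∃ n, Odd n ∧ ∃ u, PW G u u n := ⟨n₀, hodd₀, hex₀⟩
  set m := Nat.find hPex with hmdef
  obtain ⟨hmodd, u, hpw⟩ := Nat.find_spec hPex
  have hmin : ∀ k, Odd k → (∃ x, PW G x x k) → m ≤ k := fun k hk hex =>
    Nat.find_le ⟨hk, hex⟩
  obtain ⟨c, hc0, hcm, hadj⟩ := hpw
  have hm1 : m ≠ 1 := by
    intro h
    have h1 := hadj 0 (by omega)
    rw [show (0 + 1 : ℕ) = 1 from rfl, hc0, show (1 : ℕ) = m from h.symm, hcm] at h1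
    exact G.loopless.irrefl u h1
  have hm3 : m ≠ 3 := by
    intro h
    have h1 := hadj 0 (by omega)
    have h2 := hadj 1 (by omega)
    have h3 := hadj 2 (by omega)
    rw [show (2 + 1 : ℕ) = m from by omega, hcm, ← hc0] at h3
    exact tri (c 0) (c 1) (c 2) h1 h2 (h3.symm).symm
  have hm5 : 5 ≤ m := by
    obtain ⟨t, ht⟩ := hmodd
    omega
  haveI : NeZero m := ⟨by omega⟩
  haveI : Fact (1 < m) := ⟨by omega⟩
  -- injectivity of c on [0, m)
  have hinj' : ∀ i j, i < j → j < m → c i = c j → False := by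
    intro i j hij hjm hcij
    have p1 : PW G (c i) (c i) (j - i) := by
      refine ⟨fun t => c (i + t), by simp, ?_, fun t ht => hadj (i + t) (by omega)⟩
      show c (i + (j - i)) = c i
      rw [show i + (j - i) = j from by omega, ← hcij]
    have p2 : PW G (c j) (c j) ((m - j) + i) := by
      refine pw_append (w := c j) (v := c 0) ?_ ?_
      · refine ⟨fun t => c (j + t), by simp, ?_, fun t ht => hadj (j + t) (by omega)⟩
        show c (j + (m - j)) = c 0
        rw [show j + (m - j) = m from by omega, hcm]
        exact hc0.symm
      · exact ⟨c, rfl, hcij, fun t ht => hadj t (by omega)⟩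
    obtain ⟨t, ht⟩ := hmodd
    rcases Nat.even_or_odd (j - i) with he | ho
    · obtain ⟨s, hs⟩ := he
      have hodd2 : Odd ((m - j) + i) := Nat.odd_iff.mpr (by omega)
      have := hmin _ hodd2 ⟨c j, p2⟩
      omega
    · have := hmin _ ho ⟨c i, p1⟩
      obtain ⟨s, hs⟩ := ho
      omega
  -- the cycle function on ZMod m
  set cb : ZMod m → V := fun x => c x.val with hcb
  have hcadj : ∀ x : ZMod m, G.Adj (cb x) (cb (x + 1)) := by
    intro x
    have h1 : (x + 1).val = (x.val + 1) % m := by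
      rw [ZMod.val_add, ZMod.val_one]
    show G.Adj (c x.val) (c (x + 1).val)
    by_cases h : x.val + 1 = m
    · rw [h1, h, Nat.mod_self]
      have h2 := hadj x.val (by have := ZMod.val_lt x; omega)
      rw [h, hcm, ← hc0] at h2
      exact h2
    · rw [h1, Nat.mod_eq_of_lt (by have := ZMod.val_lt x; omega)]
      exact hadj x.val (by have := ZMod.val_lt x; omega)
  have hinj : Function.Injective cb := by
    intro x y hxy
    by_contra hne
    rcases lt_trichotomy x.val y.val with h | h | h
    · exact hinj' _ _ h (ZMod.val_lt y) hxy
    · exact hne (ZMod.val_injective m h)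
    · exact hinj' _ _ h (ZMod.val_lt x) hxy.symm
  have harc : ∀ (i : ZMod m) (d : ℕ), PW G (cb i) (cb (i + d)) d := by
    intro i d
    induction d with
    | zero => simpa using pw_refl G (cb i)
    | succ d ihd =>
      have h : (i + ((d : ℕ) + 1 : ℕ) : ZMod m) = (i + d) + 1 := by push_cast; ring
      rw [h]
      exact pw_append ihd (pw_single (hcadj (i + d)))
  -- key lemma: two neighbours on the cycle
  have key : ∀ (x : V) (i j : ZMod m), G.Adj x (cb i) → G.Adj x (cb j) → i ≠ j →
      Odd (j - i).val → (j - i).val = m - 2 := by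
    intro x i j hxi hxj hij hodd
    have hdm : (j - i).val < m := ZMod.val_lt _
    have hd0 : (j - i).val ≠ 0 := by
      intro h
      exact hij (by have := (ZMod.val_eq_zero (j - i)).mp h; rwa [sub_eq_zero, eq_comm] at this)
    have hcast : (((j - i).val : ℕ) : ZMod m) = j - i := ZMod.natCast_rightInverse _
    have hij' : i + ((j - i).val : ℕ) = j := by rw [hcast]; ring
    have pcl : PW G x x (1 + (j - i).val + 1) := by
      refine pw_append (pw_append (pw_single hxi) (harc i (j - i).val)) ?_
      rw [hij']
      exact pw_single hxj.symm
    obtain ⟨s, hs⟩ := hodd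
    have hle := hmin (1 + (j - i).val + 1) (Nat.odd_iff.mpr (by omega)) ⟨x, pcl⟩
    obtain ⟨t, ht⟩ := hmodd
    omega
  have hval_cast : ∀ z : ZMod m, ((z.val : ℕ) : ZMod m) = z := fun z =>
    ZMod.natCast_rightInverse z
  have pair : ∀ (x : V) (i j : ZMod m), G.Adj x (cb i) → G.Adj x (cb j) → i ≠ j →
      (j - i = (2 : ZMod m) ∨ j - i = -2) := by
    intro x i j hxi hxj hij
    have hne1 : (j - i) ≠ 0 := sub_ne_zero.mpr (Ne.symm hij)
    have hne2 : (i - j) ≠ 0 := sub_ne_zero.mpr hij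
    have hsum : (j - i).val + (i - j).val = m := by
      have h2 : (j - i) + (i - j) = 0 := by ring
      have h3 := ZMod.val_add (j - i) (i - j)
      rw [h2, ZMod.val_zero] at h3
      have hv1 : (j - i).val < m := ZMod.val_lt _
      have hv2 : (i - j).val < m := ZMod.val_lt _
      have hnz1 : (j - i).val ≠ 0 := fun h => hne1 ((ZMod.val_eq_zero _).mp h)
      have hnz2 : (i - j).val ≠ 0 := fun h => hne2 ((ZMod.val_eq_zero _).mp h)
      rcases Nat.lt_or_ge ((j - i).val + (i - j).val) m with hlt | hge
      · rw [Nat.mod_eq_of_lt hlt] at h3; omega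
      · have hlt2 : (j - i).val + (i - j).val - m < m := by omega
        rw [Nat.mod_eq_sub_mod hge, Nat.mod_eq_of_lt hlt2] at h3
        omega
    have hm2cast : ((m - 2 : ℕ) : ZMod m) = -2 := by
      have h2m : 2 ≤ m := by omega
      rw [Nat.cast_sub h2m, ZMod.natCast_self]
      push_cast
      ring
    obtain ⟨t, ht⟩ := hmodd
    rcases Nat.even_or_odd (j - i).val with he | ho
    · obtain ⟨s, hs⟩ := he
      have ho2 : Odd (i - j).val := Nat.odd_iff.mpr (by omega)
      have hv := key x j i hxj hxi (Ne.symm hij) ho2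
      left
      have hval2 : (j - i).val = 2 := by omega
      rw [← hval_cast (j - i), hval2]
      norm_num
    · right
      have hv := key x i j hxi hxj hij ho
      rw [← hval_cast (j - i), hv, hm2cast]
  -- the vertex set of the cycle
  set S : Finset V := Finset.image cb Finset.univ with hS
  have hScard : S.card = m := by
    rw [hS, Finset.card_image_of_injective _ hinj, Finset.card_univ, ZMod.card]
  have hmn : m ≤ Fintype.card V := by
    rw [← hScard]
    exact Finset.card_le_card (Finset.subset_univ S)
  -- every vertex has at most 2 neighbours in S
  have hdeg : ∀ x : V, (S.filter (fun s => G.Adj x s)).card ≤ 2 := by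
    intro x
    by_contra hcard
    push_neg at hcard
    obtain ⟨a, b, d, ha, hb, hd, hab, had, hbd⟩ := Finset.two_lt_card_iff.mp hcard
    rw [Finset.mem_filter] at ha hb hd
    obtain ⟨i, -, hi⟩ := Finset.mem_image.mp ha.1
    obtain ⟨j, -, hj⟩ := Finset.mem_image.mp hb.1
    obtain ⟨k, -, hk⟩ := Finset.mem_image.mp hd.1
    have hija : i ≠ j := fun h => hab (by rw [← hi, ← hj, h])
    have hik : i ≠ k := fun h => had (by rw [← hi, ← hk, h])
    have hjk : j ≠ k := fun h => hbd (by rw [← hj, ← hk, h])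
    have hxi : G.Adj x (cb i) := hi ▸ ha.2
    have hxj : G.Adj x (cb j) := hj ▸ hb.2
    have hxk : G.Adj x (cb k) := hk ▸ hd.2
    have p1 := pair x i j hxi hxj hija
    have p2 := pair x j k hxj hxk hjk
    have p3 := pair x i k hxi hxk hik
    have hdvd : (m : ℕ) ∣ 2 ∨ (m : ℕ) ∣ 6 := by
      have h2 : ∀ a : ℕ, ((a : ℕ) : ZMod m) = 0 → (m : ℕ) ∣ a := fun a ha =>
        (ZMod.natCast_eq_zero_iff a m).mp ha
      rcases p1 with h1 | h1 <;> rcases p2 with hq | hq <;> rcases p3 with hr | hr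
      · left; apply h2 2; push_cast
        linear_combination hr - h1 - hq
      · right; apply h2 6; push_cast
        linear_combination hr - h1 - hq
      · left; apply h2 2; push_cast
        linear_combination h1 + hq - hr
      · left; apply h2 2; push_cast
        linear_combination hr - h1 - hq
      · left; apply h2 2; push_cast
        linear_combination h1 + hq - hr
      · left; apply h2 2; push_cast
        linear_combination hr - h1 - hq
      · right; apply h2 6; push_cast
        linear_combination h1 + hq - hr
      · left; apply h2 2; push_cast
        linear_combination h1 + hq - hr
    obtain ⟨t, ht⟩ := hmodd
    rcases hdvd with h | h
    · have := Nat.le_of_dvd (by norm_num) h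
      omega
    · have h6 := Nat.le_of_dvd (by norm_num) h
      have hm5eq : m = 5 := by omega
      rw [hm5eq] at h
      norm_num at h
  -- lower bound on edges inside S
  have hcycedges : m ≤ (G.edgeFinset ∩ S.sym2).card := by
    have hsub : Finset.image (fun i : ZMod m => s(cb i, cb (i + 1))) Finset.univ ⊆
        G.edgeFinset ∩ S.sym2 := by
      intro e he
      obtain ⟨i, -, rfl⟩ := Finset.mem_image.mp he
      rw [Finset.mem_inter, mem_edgeFinset, mem_edgeSet]
      refine ⟨hcadj i, Finset.mk_mem_sym2_iff.mpr ⟨?_, ?_⟩⟩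
      · exact Finset.mem_image.mpr ⟨i, Finset.mem_univ _, rfl⟩
      · exact Finset.mem_image.mpr ⟨i + 1, Finset.mem_univ _, rfl⟩
    have hinj2 : Set.InjOn (fun i : ZMod m => s(cb i, cb (i + 1)))
        ↑(Finset.univ : Finset (ZMod m)) := by
      intro i _ j _ hij
      simp only [Sym2.eq, Sym2.rel_iff', Prod.mk.injEq, Prod.swap_prod_mk] at hij
      rcases hij with ⟨h1, -⟩ | ⟨h1, h2⟩
      · exact hinj h1
      · have hij1 : i = j + 1 := hinj h1
        have hij2 : i + 1 = j := hinj h2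
        have : ((2 : ℕ) : ZMod m) = 0 := by
          push_cast
          linear_combination hij2 - hij1
        have hdvd := (ZMod.natCast_eq_zero_iff 2 m).mp this
        have := Nat.le_of_dvd (by norm_num) hdvd
        omega
    calc m = (Finset.univ : Finset (ZMod m)).card := by rw [Finset.card_univ, ZMod.card]
      _ = (Finset.image (fun i : ZMod m => s(cb i, cb (i + 1))) Finset.univ).card :=
          (Finset.card_image_of_injOn hinj2).symm
      _ ≤ (G.edgeFinset ∩ S.sym2).card := Finset.card_le_card hsub
  -- weight function counting
  set n := Fintype.card V with hn
  set E := G.edgeFinset with hE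
  set a := (E ∩ (Sᶜ).sym2).card with ha
  set b := (E \ (Sᶜ).sym2).card with hb
  have hEab : E.card = a + b := (Finset.card_inter_add_card_sdiff E ((Sᶜ).sym2)).symm
  -- the double counting sum
  have hW : b + (E ∩ S.sym2).card ≤ 2 * n := by
    have hsum1 : ∑ e ∈ E, (S.filter (fun s => s ∈ e)).card
        = ∑ s ∈ S, (E.filter (fun e => s ∈ e)).card :=
      double_count E S (fun e s => s ∈ e)
    have hsum2 : ∀ s : V, (E.filter (fun e => s ∈ e)).card = G.degree s := by
      intro s
      rw [hE, ← card_incidenceFinset_eq_degree]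
      congr 1
      rw [incidenceFinset_eq_filter]
    have hsum3 : ∑ s ∈ S, G.degree s
        = ∑ x ∈ Finset.univ, (S.filter (fun s => G.Adj x s)).card := by
      have hdc := double_count S (Finset.univ : Finset V) (fun s x => G.Adj s x)
      simp only [degree, neighborFinset_eq_filter]
      rw [hdc]
      refine Finset.sum_congr rfl fun x _ => ?_
      congr 1
      ext s
      simp only [Finset.mem_filter]
      exact and_congr_right fun _ => ⟨fun h => h.symm, fun h => h.symm⟩
    have hbound : ∑ e ∈ E, (S.filter (fun s => s ∈ e)).card ≤ 2 * n := by
      rw [hsum1]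
      calc ∑ s ∈ S, (E.filter (fun e => s ∈ e)).card = ∑ s ∈ S, G.degree s :=
            Finset.sum_congr rfl fun s _ => hsum2 s
        _ = ∑ x ∈ Finset.univ, (S.filter (fun s => G.Adj x s)).card := hsum3
        _ ≤ ∑ _x ∈ (Finset.univ : Finset V), 2 := Finset.sum_le_sum fun x _ => hdeg x
        _ = 2 * n := by rw [Finset.sum_const, Finset.card_univ, smul_eq_mul, hn, mul_comm]
    -- lower bound for the sum
    have hsplitsum : ∑ e ∈ E ∩ S.sym2, (S.filter (fun s => s ∈ e)).card
        + ∑ e ∈ E \ S.sym2, (S.filter (fun s => s ∈ e)).card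
        = ∑ e ∈ E, (S.filter (fun s => s ∈ e)).card := by
      rw [← Finset.filter_mem_eq_inter, Finset.sdiff_eq_filter]
      exact Finset.sum_filter_add_sum_filter_not E (· ∈ S.sym2) _
    have hin2 : ∀ e ∈ E ∩ S.sym2, 2 ≤ (S.filter (fun s => s ∈ e)).card := by
      intro e he
      obtain ⟨x, y, rfl⟩ : ∃ x y, e = s(x, y) := by
        induction e using Sym2.ind with
        | _ x y => exact ⟨x, y, rfl⟩
      rw [Finset.mem_inter, mem_edgeFinset, mem_edgeSet] at he
      have hx : x ∈ S := (Finset.mk_mem_sym2_iff.mp he.2).1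
      have hy : y ∈ S := (Finset.mk_mem_sym2_iff.mp he.2).2
      refine Finset.one_lt_card.mpr ⟨x, ?_, y, ?_, he.1.ne⟩
      · exact Finset.mem_filter.mpr ⟨hx, Sym2.mem_mk_left x y⟩
      · exact Finset.mem_filter.mpr ⟨hy, Sym2.mem_mk_right x y⟩
    have hbsplit : b = (E ∩ S.sym2).card + ((E \ (Sᶜ).sym2) \ S.sym2).card := by
      have heq : (E \ (Sᶜ).sym2) ∩ S.sym2 = E ∩ S.sym2 := by
        ext e
        simp only [Finset.mem_inter, Finset.mem_sdiff]
        constructor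
        · rintro ⟨⟨he, -⟩, hs⟩
          exact ⟨he, hs⟩
        · rintro ⟨he, hs⟩
          refine ⟨⟨he, fun hcs => ?_⟩, hs⟩
          obtain ⟨x, y, rfl⟩ : ∃ x y, e = s(x, y) := by
            induction e using Sym2.ind with
            | _ x y => exact ⟨x, y, rfl⟩
          have hx : x ∈ S := (Finset.mk_mem_sym2_iff.mp hs).1
          have hx' : x ∈ Sᶜ := (Finset.mk_mem_sym2_iff.mp hcs).1
          exact (Finset.mem_compl.mp hx') hx
      rw [hb, ← heq]
      exact (Finset.card_inter_add_card_sdiff _ _).symm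
    have hrest1 : ∀ e ∈ (E \ (Sᶜ).sym2) \ S.sym2, 1 ≤ (S.filter (fun s => s ∈ e)).card := by
      intro e he
      rw [Finset.mem_sdiff, Finset.mem_sdiff] at he
      obtain ⟨⟨heE, hec⟩, -⟩ := he
      rw [Finset.mem_sym2_iff] at hec
      push_neg at hec
      obtain ⟨x, hxe, hxc⟩ := hec
      rw [Finset.mem_compl, not_not] at hxc
      exact Finset.card_pos.mpr ⟨x, Finset.mem_filter.mpr ⟨hxc, hxe⟩⟩
    have hlow : b + (E ∩ S.sym2).card ≤ ∑ e ∈ E, (S.filter (fun s => s ∈ e)).card := by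
      rw [← hsplitsum, hbsplit]
      have h1 : ((E ∩ S.sym2).card : ℕ) * 2 ≤ ∑ e ∈ E ∩ S.sym2,
          (S.filter (fun s => s ∈ e)).card := by
        have := Finset.card_nsmul_le_sum (E ∩ S.sym2)
          (fun e => (S.filter (fun s => s ∈ e)).card) 2 hin2
        simpa [smul_eq_mul] using this
      have h2 : (((E \ (Sᶜ).sym2) \ S.sym2).card : ℕ) * 1 ≤
          ∑ e ∈ (E \ (Sᶜ).sym2) \ S.sym2, (S.filter (fun s => s ∈ e)).card := by
        have := Finset.card_nsmul_le_sum ((E \ (Sᶜ).sym2) \ S.sym2)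
          (fun e => (S.filter (fun s => s ∈ e)).card) 1 hrest1
        simpa [smul_eq_mul] using this
      have h3 : ∑ e ∈ (E \ (Sᶜ).sym2) \ S.sym2, (S.filter (fun s => s ∈ e)).card
          ≤ ∑ e ∈ E \ S.sym2, (S.filter (fun s => s ∈ e)).card := by
        apply Finset.sum_le_sum_of_subset
        intro e he
        rw [Finset.mem_sdiff] at he ⊢
        rw [Finset.mem_sdiff] at he
        exact ⟨he.1.1, he.2⟩
      omega
    omega
  -- Mantel bound on edges avoiding S
  have h4a : 4 * a ≤ (n - m) ^ 2 := by
    have hman := mantel_aux G tri ((Sᶜ : Finset V).card) Sᶜ le_rfl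
    have hcompl : (Sᶜ : Finset V).card = n - m := by rw [Finset.card_compl, hScard]
    rw [hcompl] at hman
    exact hman
  -- final arithmetic
  have hEcast : (G.edgeSet.ncard : ℝ) = (E.card : ℝ) := by
    rw [hE, ← coe_edgeFinset, Set.ncard_coe_finset]
  rw [hEcast] at hsize
  have hEab' : (E.card : ℝ) = (a : ℝ) + b := by exact_mod_cast hEab
  have hbm : (b : ℝ) + m ≤ 2 * n := by
    have h1 : b + m ≤ 2 * n := by omega
    exact_mod_cast h1
  have h4a' : 4 * (a : ℝ) ≤ ((n : ℝ) - m) ^ 2 := by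
    have hcast : ((n - m : ℕ) : ℝ) = (n : ℝ) - m := by
      rw [Nat.cast_sub hmn]
    calc 4 * (a : ℝ) = ((4 * a : ℕ) : ℝ) := by push_cast; ring
      _ ≤ (((n - m) ^ 2 : ℕ) : ℝ) := by exact_mod_cast h4a
      _ = ((n : ℝ) - m) ^ 2 := by rw [Nat.cast_pow, hcast]
  have hm5' : (5 : ℝ) ≤ (m : ℝ) := by exact_mod_cast hm5
  have hmn' : (m : ℝ) ≤ (n : ℝ) := by exact_mod_cast hmn
  have hfact : (0 : ℝ) ≤ ((m : ℝ) - 5) * (2 * n - m - 1) := by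
    apply mul_nonneg
    · linarith
    · linarith
  rw [hEab'] at hsize
  nlinarith [hsize, h4a', hbm, hfact]


/-- A nonbipartite graph of order n with more than (n-1)²/4 + 1 edges contains a triangle. -/
theorem stmt_8 {V : Type*} [Fintype V] (G : SimpleGraph V)
    (hnb : ¬ ∃ A : Set V, (∀ a ∈ A, ∀ b ∈ A, ¬ G.Adj a b) ∧
      (∀ a ∈ Aᶜ, ∀ b ∈ Aᶜ, ¬ G.Adj a b))
    (hsize : ((Fintype.card V : ℝ) - 1) ^ 2 / 4 + 1 < (G.edgeSet.ncard : ℝ)) :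
    HasCycleLen G 3 := by
  exact stmt_8' G hnb hsize
end

section
/- Let G be a triangle-free graph of even order n ≥ 6 with exactly ⌊n²/4⌋ − 1 edges. Then G is isomorphic to either the balanced complete bipartite graph K_{n/2,n/2} minus one edge, or to K_{n/2−1, n/2+1}. -/
open SimpleGraph

/- ### Auxiliary lemmas -/

lemma tri_free {V : Type*} {G : SimpleGraph V} (htf : ¬ HasCycleLen G 3)
    {a b c : V} (hab : G.Adj a b) (hbc : G.Adj b c) (hca : G.Adj c a) : False := by
  apply htf
  refine ⟨a, Walk.cons hab (Walk.cons hbc (Walk.cons hca Walk.nil)), ?_, rfl⟩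
  have h1 : a ≠ b := hab.ne
  have h2 : b ≠ c := hbc.ne
  have h3 : c ≠ a := hca.ne
  simp [Walk.isCycle_def, Walk.isTrail_def, List.Nodup, h1, h2, h3, h1.symm, h2.symm, h3.symm,
    Sym2.eq_iff]

open Finset in
open scoped Classical in
lemma deg_sum {V : Type*} [Fintype V] [DecidableEq V] (G : SimpleGraph V) [DecidableRel G.Adj]
    (B : Finset V) (hcov : ∀ e ∈ G.edgeFinset, ∃ v ∈ e, v ∈ B) :
    ∑ b ∈ B, G.degree b
      = G.edgeFinset.card + (G.edgeFinset.filter (fun e => ∀ v ∈ e, v ∈ B)).card := by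
  have h1 : ∀ b, G.degree b = (G.edgeFinset.filter (fun e => b ∈ e)).card := fun b => by
    rw [← G.card_incidenceFinset_eq_degree, incidenceFinset_eq_filter]
  have key : ∀ e ∈ G.edgeFinset,
      (B.filter (fun b => b ∈ e)).card = 1 + (if ∀ v ∈ e, v ∈ B then 1 else 0) := by
    intro e he
    induction e with
    | _ u v =>
      have hadj : G.Adj u v := by rwa [mem_edgeFinset, mem_edgeSet] at he
      have huv : u ≠ v := hadj.ne
      have hfil : B.filter (fun b => b ∈ s(u,v)) = {u,v} ∩ B := by
        ext x
        simp only [Finset.mem_filter, Finset.mem_inter, Finset.mem_insert,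
          Finset.mem_singleton, Sym2.mem_iff]
        tauto
      obtain ⟨w, hw, hwB⟩ := hcov _ he
      rw [hfil]
      rw [Sym2.mem_iff] at hw
      by_cases hu : u ∈ B <;> by_cases hv : v ∈ B
      · rw [if_pos]
        · rw [Finset.inter_eq_left.2
              (by intro x hx; simp at hx; rcases hx with rfl|rfl <;> assumption),
            Finset.card_insert_of_notMem (by simp [huv]), Finset.card_singleton]
        · intro x hx; rw [Sym2.mem_iff] at hx; rcases hx with rfl|rfl <;> assumption
      · rw [if_neg (by intro h; exact hv (h v (by simp)))]
        have heq : ({u, v} : Finset V) ∩ B = {u} := by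
          ext x
          simp only [Finset.mem_inter, Finset.mem_insert, Finset.mem_singleton]
          constructor
          · rintro ⟨h1, h2⟩
            rcases h1 with rfl | rfl
            exacts [rfl, absurd h2 hv]
          · rintro rfl; exact ⟨Or.inl rfl, hu⟩
        rw [heq, Finset.card_singleton]
      · rw [if_neg (by intro h; exact hu (h u (by simp)))]
        have heq : ({u, v} : Finset V) ∩ B = {v} := by
          ext x
          simp only [Finset.mem_inter, Finset.mem_insert, Finset.mem_singleton]
          constructor
          · rintro ⟨h1, h2⟩
            rcases h1 with rfl | rfl
            exacts [absurd h2 hu, rfl]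
          · rintro rfl; exact ⟨Or.inr rfl, hv⟩
        rw [heq, Finset.card_singleton]
      · exfalso; rcases hw with rfl|rfl <;> [exact hu hwB; exact hv hwB]
  calc ∑ b ∈ B, G.degree b = ∑ b ∈ B, ∑ e ∈ G.edgeFinset, (if b ∈ e then 1 else 0) := by
        simp_rw [h1, Finset.card_filter]
    _ = ∑ e ∈ G.edgeFinset, ∑ b ∈ B, (if b ∈ e then 1 else 0) := Finset.sum_comm
    _ = ∑ e ∈ G.edgeFinset, (B.filter (fun b => b ∈ e)).card := by
        simp_rw [Finset.card_filter]
    _ = ∑ e ∈ G.edgeFinset, (1 + (if ∀ v ∈ e, v ∈ B then 1 else 0)) :=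
        Finset.sum_congr rfl key
    _ = G.edgeFinset.card + (G.edgeFinset.filter (fun e => ∀ v ∈ e, v ∈ B)).card := by
        rw [Finset.sum_add_distrib, Finset.card_filter]
        simp

noncomputable def splitEquiv {V : Type*} [Fintype V] [DecidableEq V] (A : Finset V)
    (a b : ℕ) (ha : A.card = a) (hb : Aᶜ.card = b) : V ≃ (Fin a ⊕ Fin b) := by
  refine Equiv.ofBijective
    (fun v => if h : v ∈ A then Sum.inl ((A.equivFin.trans (finCongr ha)) ⟨v, h⟩)
      else Sum.inr ((Aᶜ.equivFin.trans (finCongr hb)) ⟨v, by simpa using h⟩)) ⟨?_, ?_⟩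
  · intro v w hvw
    by_cases hv : v ∈ A <;> by_cases hw : w ∈ A <;> simp [hv, hw] at hvw
    · exact hvw
    · exact hvw
  · rintro (i | j)
    · obtain ⟨⟨v, hv⟩, hvi⟩ := (A.equivFin.trans (finCongr ha)).surjective i
      exact ⟨v, by simp [hv, hvi]⟩
    · obtain ⟨⟨v, hv⟩, hvj⟩ := (Aᶜ.equivFin.trans (finCongr hb)).surjective j
      have : v ∉ A := by simpa using hv
      exact ⟨v, by simp [this, hvj]⟩

lemma splitEquiv_isLeft {V : Type*} [Fintype V] [DecidableEq V] (A : Finset V)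
    (a b : ℕ) (ha : A.card = a) (hb : Aᶜ.card = b) (v : V) :
    (splitEquiv A a b ha hb v).isLeft ↔ v ∈ A := by
  unfold splitEquiv
  by_cases h : v ∈ A <;> simp [h, Equiv.ofBijective]

lemma splitEquiv_isRight {V : Type*} [Fintype V] [DecidableEq V] (A : Finset V)
    (a b : ℕ) (ha : A.card = a) (hb : Aᶜ.card = b) (v : V) :
    (splitEquiv A a b ha hb v).isRight ↔ v ∉ A := by
  rw [← splitEquiv_isLeft A a b ha hb v, Sum.isRight_iff, Sum.isLeft_iff]
  constructor
  · rintro ⟨y, hy⟩ ⟨x, hx⟩; rw [hx] at hy; cases hy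
  · intro h
    cases hs : splitEquiv A a b ha hb v with
    | inl x => exact absurd ⟨x, hs⟩ h
    | inr y => exact ⟨y, rfl⟩

lemma iso_complete_bip {V : Type*} [Fintype V] [DecidableEq V] (G : SimpleGraph V) (A : Finset V)
    (h : ∀ v w, G.Adj v w ↔ ((v ∈ A ∧ w ∉ A) ∨ (v ∉ A ∧ w ∈ A)))
    (a b : ℕ) (ha : A.card = a) (hb : Aᶜ.card = b) :
    Nonempty (G ≃g completeBipartiteGraph (Fin a) (Fin b)) := by
  refine ⟨⟨splitEquiv A a b ha hb, ?_⟩⟩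
  intro v w
  rw [completeBipartiteGraph_adj]
  simp only [splitEquiv_isLeft, splitEquiv_isRight]
  exact (h v w).symm

open Finset in
lemma iso_bip_minus {V : Type*} [Fintype V] [DecidableEq V] (G : SimpleGraph V) (A : Finset V)
    (a₀ b₀ : V) (ha₀ : a₀ ∈ A) (hb₀ : b₀ ∉ A)
    (h : ∀ v w, G.Adj v w ↔
      (((v ∈ A ∧ w ∉ A) ∨ (v ∉ A ∧ w ∈ A)) ∧ s(v,w) ≠ s(a₀,b₀)))
    (a b : ℕ) (ha : A.card = a) (hb : Aᶜ.card = b) :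
    ∃ e ∈ (completeBipartiteGraph (Fin a) (Fin b)).edgeSet,
      Nonempty (G ≃g (completeBipartiteGraph (Fin a) (Fin b)).deleteEdges {e}) := by
  have hmap : ∀ x y : V,
      s(splitEquiv A a b ha hb x, splitEquiv A a b ha hb y)
        = s(splitEquiv A a b ha hb a₀, splitEquiv A a b ha hb b₀) ↔ s(x,y) = s(a₀,b₀) := by
    intro x y
    constructor
    · intro hs
      have h2 : Sym2.map (splitEquiv A a b ha hb) s(x,y)
          = Sym2.map (splitEquiv A a b ha hb) s(a₀,b₀) := by simpa using hs
      exact Sym2.map.injective (Equiv.injective _) h2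
    · intro hs
      have := congrArg (Sym2.map (splitEquiv A a b ha hb)) hs
      simpa using this
  refine ⟨s(splitEquiv A a b ha hb a₀, splitEquiv A a b ha hb b₀), ?_,
    ⟨⟨splitEquiv A a b ha hb, ?_⟩⟩⟩
  · rw [mem_edgeSet, completeBipartiteGraph_adj]
    left
    constructor
    · rw [splitEquiv_isLeft]; exact ha₀
    · rw [splitEquiv_isRight]; exact hb₀
  · intro v w
    rw [deleteEdges_adj, completeBipartiteGraph_adj]
    simp only [splitEquiv_isLeft, splitEquiv_isRight, Set.mem_singleton_iff]
    rw [h v w, hmap v w]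

lemma CE_card {V : Type*} [DecidableEq V] (A B : Finset V) (hd : ∀ x ∈ A, x ∉ B) :
    ((A ×ˢ B).image (fun p => s(p.1, p.2))).card = A.card * B.card := by
  rw [Finset.card_image_of_injOn, Finset.card_product]
  rintro ⟨a1, b1⟩ h1 ⟨a2, b2⟩ h2 he
  simp only [Finset.mem_coe, Finset.mem_product] at h1 h2
  simp only [Sym2.eq_iff] at he
  rcases he with ⟨rfl, rfl⟩ | ⟨rfl, rfl⟩
  · rfl
  · exact absurd h2.2 (hd _ h1.1)

lemma mem_CE {V : Type*} [DecidableEq V] (A B : Finset V) {v w : V} :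
    s(v, w) ∈ (A ×ˢ B).image (fun p => s(p.1, p.2)) ↔
      (v ∈ A ∧ w ∈ B) ∨ (w ∈ A ∧ v ∈ B) := by
  simp only [Finset.mem_image, Finset.mem_product, Prod.exists, Sym2.eq_iff]
  constructor
  · rintro ⟨a, b, ⟨hA, hB⟩, (⟨rfl, rfl⟩ | ⟨rfl, rfl⟩)⟩
    · exact Or.inl ⟨hA, hB⟩
    · exact Or.inr ⟨hA, hB⟩
  · rintro (⟨hA, hB⟩ | ⟨hA, hB⟩)
    · exact ⟨v, w, ⟨hA, hB⟩, Or.inl ⟨rfl, rfl⟩⟩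
    · exact ⟨w, v, ⟨hA, hB⟩, Or.inr ⟨rfl, rfl⟩⟩

lemma prod_le_sq (a b m : ℕ) (h : a + b = m + m) : a * b ≤ m * m := by
  zify at h ⊢
  nlinarith [sq_nonneg ((a : ℤ) - b)]

lemma eq_of_prod (a b m : ℕ) (h : a + b = m + m) (h2 : a * b = m * m) : a = m := by
  zify at h h2
  have hsq : ((a : ℤ) - m) ^ 2 = 0 := by linear_combination (-1 : ℤ) * h2 + (a : ℤ) * h
  have := pow_eq_zero_iff (n := 2) (by norm_num) |>.mp hsq
  have : (a : ℤ) = m := by linarith [sub_eq_zero.mp this]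
  exact_mod_cast this

lemma pm_one (a b m : ℕ) (h : a + b = m + m) (h2 : a * b + 1 = m * m) :
    a + 1 = m ∨ a = m + 1 := by
  zify at h h2
  have hsq : ((a : ℤ) - m) ^ 2 = 1 := by linear_combination (-1 : ℤ) * h2 + (a : ℤ) * h
  have hfac : ((a : ℤ) - m - 1) * ((a : ℤ) - m + 1) = 0 := by linear_combination hsq
  rcases mul_eq_zero.mp hfac with h0 | h0
  · right
    have : (a : ℤ) = m + 1 := by linarith
    exact_mod_cast this
  · left
    have : (a : ℤ) + 1 = m := by linarith
    exact_mod_cast this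

set_option maxHeartbeats 1000000 in
/-- A triangle-free graph of even order n ≥ 6 with exactly ⌊n²/4⌋ - 1 edges is
K_{n/2,n/2} minus one edge, or K_{n/2-1,n/2+1}. -/
theorem stmt_9 {V : Type*} [Fintype V] (G : SimpleGraph V) (n : ℕ)
    (hn6 : 6 ≤ n) (hne : Even n) (hcard : Fintype.card V = n)
    (htf : ¬ HasCycleLen G 3)
    (hsize : G.edgeSet.ncard = n ^ 2 / 4 - 1) :
    (∃ e ∈ (completeBipartiteGraph (Fin (n / 2)) (Fin (n / 2))).edgeSet,
        Nonempty (G ≃g (completeBipartiteGraph (Fin (n / 2)) (Fin (n / 2))).deleteEdges {e})) ∨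
      Nonempty (G ≃g completeBipartiteGraph (Fin (n / 2 - 1)) (Fin (n / 2 + 1))) := by
  classical
  obtain ⟨m, rfl⟩ := hne
  have hm : 3 ≤ m := by omega
  have hhalf : (m + m) / 2 = m := by omega
  rw [hhalf]
  have hmm1 : 1 ≤ m * m := Nat.one_le_iff_ne_zero.mpr (by positivity)
  have hsq : (m + m) ^ 2 / 4 = m * m := by
    have h4 : (m + m) ^ 2 = 4 * (m * m) := by ring
    rw [h4]; omega
  have hEcard : G.edgeSet.ncard = G.edgeFinset.card := by
    rw [← coe_edgeFinset, Set.ncard_coe_finset]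
  have hE : G.edgeFinset.card = m * m - 1 := by rw [← hEcard, hsize, hsq]

  have hE1 : G.edgeFinset.card + 1 = m * m := by rw [hE]; exact Nat.sub_add_cancel hmm1
  -- choose a vertex of maximal degree
  have hVne : Nonempty V := Fintype.card_pos_iff.mp (by omega)
  obtain ⟨x, -, hx⟩ := Finset.exists_max_image Finset.univ (fun v => G.degree v)
    ⟨Classical.arbitrary V, Finset.mem_univ _⟩
  set A : Finset V := G.neighborFinset x with hAdef
  have hAcard : A.card = G.degree x := G.card_neighborFinset_eq_degree x
  have hΔlt : G.degree x < m + m := hcard ▸ G.degree_lt_card_verts x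
  have hBcard : Aᶜ.card = (m + m) - G.degree x := by
    rw [Finset.card_compl, hAcard, hcard]
  have hdsum : G.degree x + ((m + m) - G.degree x) = m + m := by omega
  have hAind : ∀ u ∈ A, ∀ v ∈ A, ¬ G.Adj u v := by
    intro u hu v hv hadj
    rw [hAdef, mem_neighborFinset] at hu hv
    exact tri_free htf hu hadj hv.symm
  have hcov : ∀ e ∈ G.edgeFinset, ∃ v ∈ e, v ∈ Aᶜ := by
    intro e he
    induction e with
    | _ u v =>
      by_cases hu : u ∈ Aᶜ
      · exact ⟨u, by simp, hu⟩
      by_cases hv : v ∈ Aᶜ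
      · exact ⟨v, by simp, hv⟩
      exfalso
      rw [Finset.mem_compl, not_not] at hu hv
      exact hAind u hu v hv (by rwa [mem_edgeFinset, mem_edgeSet] at he)
  have hsum := deg_sum G Aᶜ hcov
  have hsumle : ∑ b ∈ Aᶜ, G.degree b ≤ Aᶜ.card * G.degree x := by
    calc ∑ b ∈ Aᶜ, G.degree b ≤ ∑ _b ∈ Aᶜ, G.degree x :=
          Finset.sum_le_sum (fun b _ => hx b (Finset.mem_univ b))
      _ = Aᶜ.card * G.degree x := by rw [Finset.sum_const, smul_eq_mul]
  have hprodle : ((m + m) - G.degree x) * G.degree x ≤ m * m := by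
    rw [mul_comm]
    exact prod_le_sq _ _ m hdsum
  have hEBle : (G.edgeFinset.filter (fun e => ∀ v ∈ e, v ∈ Aᶜ)).card ≤ 1 := by
    have h1 : G.edgeFinset.card + (G.edgeFinset.filter (fun e => ∀ v ∈ e, v ∈ Aᶜ)).card
        ≤ m * m := by
      calc G.edgeFinset.card + _ = ∑ b ∈ Aᶜ, G.degree b := hsum.symm
        _ ≤ Aᶜ.card * G.degree x := hsumle
        _ = ((m + m) - G.degree x) * G.degree x := by rw [hBcard]
        _ ≤ m * m := hprodle
    omega
  rcases Nat.le_one_iff_eq_zero_or_eq_one.mp hEBle with hEB0 | hEB1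
  · -- B is independent: G is bipartite between A and Aᶜ
    have hBind : ∀ u ∈ Aᶜ, ∀ v ∈ Aᶜ, ¬ G.Adj u v := by
      intro u hu v hv hadj
      have hmem : s(u, v) ∈ G.edgeFinset.filter (fun e => ∀ v ∈ e, v ∈ Aᶜ) := by
        rw [Finset.mem_filter]
        refine ⟨by rwa [mem_edgeFinset, mem_edgeSet], ?_⟩
        intro w hw
        rw [Sym2.mem_iff] at hw
        rcases hw with rfl | rfl <;> assumption
      rw [Finset.card_eq_zero] at hEB0
      rw [hEB0] at hmem
      exact absurd hmem (Finset.notMem_empty _)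
    set CE : Finset (Sym2 V) := (A ×ˢ Aᶜ).image (fun p => s(p.1, p.2)) with hCEdef
    have hdisjAB : ∀ y ∈ A, y ∉ Aᶜ := fun y hy => by simp [hy]
    have hCEcard : CE.card = G.degree x * ((m + m) - G.degree x) := by
      rw [hCEdef, CE_card A Aᶜ hdisjAB, hAcard, hBcard]
    have hsub : G.edgeFinset ⊆ CE := by
      intro e he
      have hadj : e ∈ G.edgeSet := by rwa [mem_edgeFinset] at he
      revert hadj
      induction e with
      | _ u v =>
        intro hadj
        rw [mem_edgeSet] at hadj
        rw [hCEdef, mem_CE]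
        by_cases hu : u ∈ A <;> by_cases hv : v ∈ A
        · exact absurd hadj (hAind u hu v hv)
        · exact Or.inl ⟨hu, Finset.mem_compl.mpr hv⟩
        · exact Or.inr ⟨hv, Finset.mem_compl.mpr hu⟩
        · exact absurd hadj (hBind u (Finset.mem_compl.mpr hu) v (Finset.mem_compl.mpr hv))
    have hCEge : m * m - 1 ≤ CE.card := hE ▸ Finset.card_le_card hsub
    have hCEle : CE.card ≤ m * m := by
      rw [hCEcard]; exact prod_le_sq _ _ m hdsum
    rcases (by omega : CE.card = m * m - 1 ∨ CE.card = m * m) with hCEeq | hCEeq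
    · -- G is complete bipartite with parts of sizes m-1, m+1
      have hEF : G.edgeFinset = CE :=
        Finset.eq_of_subset_of_card_le hsub (by rw [hCEeq, hE])
      have hadj_iff : ∀ v w, G.Adj v w ↔ ((v ∈ A ∧ w ∉ A) ∨ (v ∉ A ∧ w ∈ A)) := by
        intro v w
        rw [← mem_edgeSet, ← mem_edgeFinset, hEF, hCEdef, mem_CE]
        simp only [Finset.mem_compl]
        tauto
      have hΔ1 : G.degree x * ((m + m) - G.degree x) + 1 = m * m := by
        rw [← hCEcard, hCEeq]
        exact Nat.sub_add_cancel hmm1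
      rcases pm_one _ _ m hdsum hΔ1 with hΔ | hΔ
      · -- degree x = m - 1
        right
        exact iso_complete_bip G A hadj_iff (m - 1) (m + 1)
          (by rw [hAcard]; omega) (by rw [hBcard]; omega)
      · -- degree x = m + 1 : use the complement as the left part
        right
        have hadj_iff' : ∀ v w, G.Adj v w ↔
            ((v ∈ Aᶜ ∧ w ∉ Aᶜ) ∨ (v ∉ Aᶜ ∧ w ∈ Aᶜ)) := by
          intro v w
          rw [hadj_iff v w]
          simp only [Finset.mem_compl, not_not]
          tauto
        exact iso_complete_bip G Aᶜ hadj_iff' (m - 1) (m + 1)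
          (by rw [hBcard]; omega) (by rw [compl_compl, hAcard]; omega)
    · -- G is K_{m,m} minus one edge
      left
      have hΔm : G.degree x = m := by
        refine eq_of_prod _ ((m + m) - G.degree x) m hdsum ?_
        rw [← hCEcard, hCEeq]
      have hone : (CE \ G.edgeFinset).card = 1 := by
        rw [Finset.card_sdiff_of_subset hsub]
        omega
      obtain ⟨e0, he0⟩ := Finset.card_eq_one.mp hone
      have he0mem : e0 ∈ CE ∧ e0 ∉ G.edgeFinset := by
        have : e0 ∈ CE \ G.edgeFinset := by rw [he0]; exact Finset.mem_singleton_self _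
        exact Finset.mem_sdiff.mp this
      have hEF : G.edgeFinset = CE.erase e0 := by
        apply Finset.eq_of_subset_of_card_le
        · intro e he
          rw [Finset.mem_erase]
          exact ⟨fun h => he0mem.2 (h ▸ he), hsub he⟩
        · rw [Finset.card_erase_of_mem he0mem.1, hCEeq, hE]
      obtain ⟨⟨a₀, b₀⟩, hmemp, rfl⟩ := Finset.mem_image.mp he0mem.1
      rw [Finset.mem_product] at hmemp
      have hadj_iff : ∀ v w, G.Adj v w ↔
          (((v ∈ A ∧ w ∉ A) ∨ (v ∉ A ∧ w ∈ A)) ∧ s(v, w) ≠ s(a₀, b₀)) := by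
        intro v w
        rw [← mem_edgeSet, ← mem_edgeFinset, hEF, Finset.mem_erase, hCEdef, mem_CE]
        simp only [Finset.mem_compl]
        tauto
      exact iso_bip_minus G A a₀ b₀ hmemp.1 (Finset.mem_compl.mp hmemp.2) hadj_iff m m
        (by rw [hAcard, hΔm]) (by rw [hBcard, hΔm]; omega)
  · -- the exceptional case with one edge inside B: contradiction
    exfalso
    have hsumval : ∑ b ∈ Aᶜ, G.degree b = m * m := by
      rw [hsum, hEB1]
      omega
    have heq : Aᶜ.card * G.degree x = m * m := by
      have hle1 : m * m ≤ Aᶜ.card * G.degree x := hsumval ▸ hsumle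
      have hle2 : Aᶜ.card * G.degree x ≤ m * m := by
        rw [hBcard]; exact hprodle
      omega
    have hΔm : G.degree x = m := by
      refine eq_of_prod _ ((m + m) - G.degree x) m hdsum ?_
      rw [mul_comm]
      rw [hBcard] at heq
      exact heq
    have hdegall : ∀ b ∈ Aᶜ, G.degree b = G.degree x := by
      by_contra hcon
      push_neg at hcon
      obtain ⟨b0, hb0, hb0ne⟩ := hcon
      have hlt : ∑ b ∈ Aᶜ, G.degree b < ∑ _b ∈ Aᶜ, G.degree x :=
        Finset.sum_lt_sum (fun i _ => hx i (Finset.mem_univ i))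
          ⟨b0, hb0, lt_of_le_of_ne (hx b0 (Finset.mem_univ b0)) hb0ne⟩
      rw [Finset.sum_const, smul_eq_mul, hsumval, heq] at hlt
      exact lt_irrefl _ hlt
    -- extract the edge inside B
    have sym2_rep : ∀ e : Sym2 V, ∃ u v, e = s(u, v) :=
      fun e => Sym2.ind (fun u v => ⟨u, v, rfl⟩) e
    obtain ⟨e0, he0⟩ := Finset.card_eq_one.mp hEB1
    have he0mem : e0 ∈ G.edgeFinset.filter (fun e => ∀ v ∈ e, v ∈ Aᶜ) := by
      rw [he0]; exact Finset.mem_singleton_self _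
    rw [Finset.mem_filter] at he0mem
    obtain ⟨b1, b2, rfl⟩ := sym2_rep e0
    have hadj12 : G.Adj b1 b2 := by
      have := he0mem.1
      rwa [mem_edgeFinset, mem_edgeSet] at this
    have hb1B : b1 ∈ Aᶜ := he0mem.2 b1 (by simp)
    have hb2B : b2 ∈ Aᶜ := he0mem.2 b2 (by simp)
    have hdisj : Disjoint (G.neighborFinset b1) (G.neighborFinset b2) := by
      rw [Finset.disjoint_left]
      intro v h1 h2
      rw [mem_neighborFinset] at h1 h2
      exact tri_free htf hadj12 h2 h1.symm
    have hcardU : (G.neighborFinset b1 ∪ G.neighborFinset b2).card = m + m := by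
      rw [Finset.card_union_of_disjoint hdisj, G.card_neighborFinset_eq_degree,
        G.card_neighborFinset_eq_degree, hdegall b1 hb1B, hdegall b2 hb2B, hΔm]
    have huniv : G.neighborFinset b1 ∪ G.neighborFinset b2 = Finset.univ :=
      Finset.eq_univ_of_card _ (by rw [hcardU, hcard])
    have hxmem : x ∈ G.neighborFinset b1 ∪ G.neighborFinset b2 := by
      rw [huniv]; exact Finset.mem_univ x
    rw [Finset.mem_union, mem_neighborFinset, mem_neighborFinset] at hxmem
    rcases hxmem with hadj | hadj
    · exact absurd (Finset.mem_compl.mp hb1B)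
        (by rw [not_not, hAdef, mem_neighborFinset]; exact hadj.symm)
    · exact absurd (Finset.mem_compl.mp hb2B)
        (by rw [not_not, hAdef, mem_neighborFinset]; exact hadj.symm)
end

section
/- Every [4,2]-graph of order n has at least ⌊(n−1)²/4⌋ edges. -/
open SimpleGraph

open scoped Classical

noncomputable def eF {V : Type*} [Fintype V] (G : SimpleGraph V) (S : Finset V) : Finset (Sym2 V) :=
  G.edgeFinset.filter (fun e => ∀ v ∈ e, v ∈ S)

lemma edgesWithin_eq {V : Type*} [Fintype V] (G : SimpleGraph V) (S : Finset V) :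
    edgesWithin G S = (eF G S).card := by
  rw [edgesWithin, ← Set.ncard_coe_finset]
  congr 1
  ext e
  simp [eF]

lemma cross {V : Type*} [Fintype V] (G : SimpleGraph V) (S A : Finset V) (hAS : A ⊆ S) :
    (eF G (S \ A)).card + ∑ x ∈ S \ A, (A.filter (G.Adj x)).card ≤ (eF G S).card := by
  classical
  set S' := S \ A with hS'
  set C : Finset (Sym2 V) := S'.biUnion (fun x => (A.filter (G.Adj x)).image (fun y => s(x, y))) with hC
  have hS'A : ∀ x ∈ S', x ∉ A := by intro x hx; exact (Finset.mem_sdiff.mp hx).2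
  have hcard : C.card = ∑ x ∈ S', (A.filter (G.Adj x)).card := by
    rw [hC, Finset.card_biUnion]
    · refine Finset.sum_congr rfl fun x hx => ?_
      rw [Finset.card_image_of_injOn]
      intro y hy y' hy' hyy'
      rw [Sym2.eq_iff] at hyy'
      rcases hyy' with ⟨-, h⟩ | ⟨h1, h2⟩
      · exact h
      · exact absurd (h1 ▸ (Finset.mem_filter.mp hy').1 : x ∈ A) (hS'A x hx)
    · intro x hx x' hx' hne
      simp only [Finset.disjoint_left, Finset.mem_image, Finset.mem_filter]
      rintro e ⟨y, ⟨hyA, -⟩, rfl⟩ ⟨y', ⟨hy'A, -⟩, he⟩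
      rw [Sym2.eq_iff] at he
      rcases he with ⟨h1, -⟩ | ⟨h1, h2⟩
      · exact hne h1.symm
      · exact hS'A x' hx' (h1 ▸ hyA)
  have hCsub : C ⊆ eF G S := by
    intro e he
    rw [hC] at he
    simp only [Finset.mem_biUnion, Finset.mem_image, Finset.mem_filter] at he
    obtain ⟨x, hx, y, ⟨hyA, hadj⟩, rfl⟩ := he
    simp only [eF, Finset.mem_filter, mem_edgeFinset, mem_edgeSet]
    refine ⟨hadj, ?_⟩
    intro v hv
    rw [Sym2.mem_iff] at hv
    rcases hv with rfl | rfl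
    · exact (Finset.mem_sdiff.mp hx).1
    · exact hAS hyA
  have hsub : eF G S' ⊆ eF G S := by
    intro e he
    simp only [eF, Finset.mem_filter] at he ⊢
    exact ⟨he.1, fun v hv => (Finset.mem_sdiff.mp (he.2 v hv)).1⟩
  have hdisj : Disjoint (eF G S') C := by
    rw [Finset.disjoint_left]
    intro e he heC
    rw [hC] at heC
    simp only [Finset.mem_biUnion, Finset.mem_image, Finset.mem_filter] at heC
    obtain ⟨x, hx, y, ⟨hyA, -⟩, rfl⟩ := heC
    simp only [eF, Finset.mem_filter] at he
    have : y ∈ S' := he.2 y (by simp)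
    exact hS'A y this hyA
  calc (eF G S').card + ∑ x ∈ S', (A.filter (G.Adj x)).card
      = (eF G S').card + C.card := by rw [hcard]
    _ = (eF G S' ∪ C).card := (Finset.card_union_of_disjoint hdisj).symm
    _ ≤ (eF G S).card := Finset.card_le_card (Finset.union_subset hsub hCsub)

lemma degbound {V : Type*} [Fintype V] (G : SimpleGraph V) (A : Finset V) (x : V) (hx : x ∉ A)
    (hind : ∀ a ∈ A, ∀ b ∈ A, ¬ G.Adj a b) :
    (eF G (insert x A)).card ≤ (A.filter (G.Adj x)).card := by
  classical
  have hsub : eF G (insert x A) ⊆ (A.filter (G.Adj x)).image (fun y => s(x, y)) := by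
    intro e he
    simp only [eF, Finset.mem_filter, mem_edgeFinset, mem_edgeSet] at he
    obtain ⟨⟨u, v⟩, rfl⟩ := Quot.exists_rep e
    have hadj : G.Adj u v := he.1
    have hu : u ∈ insert x A := he.2 u (by simp [Sym2.mem_iff])
    have hv : v ∈ insert x A := he.2 v (by simp [Sym2.mem_iff])
    simp only [Finset.mem_insert] at hu hv
    simp only [Finset.mem_image, Finset.mem_filter]
    rcases hu with rfl | huA
    · rcases hv with rfl | hvA
      · exact absurd rfl hadj.ne
      · exact ⟨v, ⟨hvA, hadj⟩, rfl⟩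
    · rcases hv with rfl | hvA
      · exact ⟨u, ⟨huA, hadj.symm⟩, Sym2.eq_swap⟩
      · exact absurd hadj (hind u huA v hvA)
  exact (Finset.card_le_card hsub).trans Finset.card_image_le

lemma arith31 (m : ℕ) (h3 : 3 ≤ m) : (m - 1)^2/4 ≤ (m - 3)^2/4 + (m - 2) := by
  obtain ⟨k, rfl⟩ : ∃ k, m = k + 3 := ⟨m - 3, by omega⟩
  have h1 : k + 3 - 1 = k + 2 := by omega
  have h2 : k + 3 - 3 = k := by omega
  have h4 : k + 3 - 2 = k + 1 := by omega
  rw [h1, h2, h4]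
  have : (k + 2)^2 = k^2 + (k + 1) * 4 := by ring
  rw [this, Nat.add_mul_div_right _ _ (by norm_num : (0:ℕ) < 4)]

lemma arith42 (m : ℕ) (h3 : 3 ≤ m) :
    (if m = 3 then 0 else (m - 1)^2/4) ≤ (if m - 3 = 3 then 0 else (m - 4)^2/4) + 2*(m - 3) := by
  rcases Nat.lt_or_ge m 7 with hm | hm
  · interval_cases m <;> norm_num
  · obtain ⟨k, rfl⟩ : ∃ k, m = k + 7 := ⟨m - 7, by omega⟩
    have h1 : k + 7 - 1 = k + 6 := by omega
    have h2 : k + 7 - 3 = k + 4 := by omega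
    have h4 : k + 7 - 4 = k + 3 := by omega
    rw [if_neg (by omega), if_neg (by omega), h1, h2, h4]
    have e1 : (k + 3)^2/4 + 2*(k + 4) = ((k+3)^2 + (2*(k+4)) * 4)/4 := by
      rw [Nat.add_mul_div_right _ _ (by norm_num : (0:ℕ) < 4)]
    rw [e1]
    apply Nat.div_le_div_right
    nlinarith

lemma lemma31 {V : Type*} [Fintype V] (G : SimpleGraph V) (S : Finset V)
    (h : ∀ T ⊆ S, T.card = 3 → 1 ≤ (eF G T).card) :
    (S.card - 1)^2/4 ≤ (eF G S).card := by
  by_cases hm : S.card ≤ 2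
  · have h1 : S.card - 1 ≤ 1 := by omega
    have h2 : (S.card - 1)^2 ≤ 1^2 := Nat.pow_le_pow_left h1 2
    have : (S.card - 1)^2/4 = 0 := Nat.div_eq_of_lt (by omega)
    omega
  · push_neg at hm
    have hm3 : 3 ≤ S.card := hm
    -- find a, b distinct in S such that every x in S \ {a,b} has an edge to {a,b}
    have key : ∃ a ∈ S, ∃ b ∈ S, a ≠ b ∧
        ∀ x ∈ S \ ({a, b} : Finset V), 1 ≤ (({a, b} : Finset V).filter (G.Adj x)).card := by
      by_cases hcl : ∃ a ∈ S, ∃ b ∈ S, a ≠ b ∧ ¬ G.Adj a b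
      · obtain ⟨a, ha, b, hb, hab, hnadj⟩ := hcl
        refine ⟨a, ha, b, hb, hab, fun x hx => ?_⟩
        have hxS := Finset.mem_sdiff.mp hx
        have hxab : x ∉ ({a, b} : Finset V) := hxS.2
        have hT : insert x ({a, b} : Finset V) ⊆ S := by
          intro v hv
          simp only [Finset.mem_insert, Finset.mem_insert, Finset.mem_singleton] at hv
          rcases hv with rfl | rfl | rfl
          · exact hxS.1
          · exact ha
          · exact hb
        have hTcard : (insert x ({a, b} : Finset V)).card = 3 := by
          rw [Finset.card_insert_of_notMem hxab, Finset.card_insert_of_notMem (by simpa using hab),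
            Finset.card_singleton]
        have hind : ∀ u ∈ ({a, b} : Finset V), ∀ v ∈ ({a, b} : Finset V), ¬ G.Adj u v := by
          intro u hu v hv
          simp only [Finset.mem_insert, Finset.mem_singleton] at hu hv
          rcases hu with rfl | rfl <;> rcases hv with rfl | rfl
          · exact G.loopless.irrefl _
          · exact hnadj
          · exact fun hadj => hnadj hadj.symm
          · exact G.loopless.irrefl _
        exact le_trans (h _ hT hTcard) (degbound G _ x hxab hind)
      · push_neg at hcl
        obtain ⟨a, ha, b, hb, hab⟩ := Finset.one_lt_card.mp (show 1 < S.card by omega)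
        refine ⟨a, ha, b, hb, hab, fun x hx => ?_⟩
        have hxS := Finset.mem_sdiff.mp hx
        have hxa : x ≠ a := fun h' => hxS.2 (by simp [h'])
        have hadj : G.Adj x a := hcl x hxS.1 a ha hxa
        refine Finset.card_pos.mpr ⟨a, ?_⟩
        simp [hadj]
    obtain ⟨a, ha, b, hb, hab, hdeg⟩ := key
    have hABS : ({a, b} : Finset V) ⊆ S := by
      intro v hv
      simp only [Finset.mem_insert, Finset.mem_singleton] at hv
      rcases hv with rfl | rfl
      · exact ha
      · exact hb
    have hABcard : ({a, b} : Finset V).card = 2 := by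
      rw [Finset.card_insert_of_notMem (by simpa using hab), Finset.card_singleton]
    have hS'card : (S \ ({a, b} : Finset V)).card = S.card - 2 := by
      rw [Finset.card_sdiff_of_subset hABS, hABcard]
    have hIH : ((S \ ({a, b} : Finset V)).card - 1)^2/4 ≤ (eF G (S \ ({a, b} : Finset V))).card :=
      lemma31 G (S \ ({a, b} : Finset V))
        (fun T hT h3 => h T (hT.trans (Finset.sdiff_subset)) h3)
    have hsum : (S \ ({a, b} : Finset V)).card ≤
        ∑ x ∈ S \ ({a, b} : Finset V), (({a, b} : Finset V).filter (G.Adj x)).card := by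
      calc (S \ ({a, b} : Finset V)).card
          = ∑ _x ∈ S \ ({a, b} : Finset V), 1 := by simp
        _ ≤ _ := Finset.sum_le_sum hdeg
    have hcross := cross G S ({a, b} : Finset V) hABS
    calc (S.card - 1)^2/4 ≤ (S.card - 3)^2/4 + (S.card - 2) := arith31 _ hm3
      _ ≤ (eF G (S \ ({a, b} : Finset V))).card +
          ∑ x ∈ S \ ({a, b} : Finset V), (({a, b} : Finset V).filter (G.Adj x)).card := by
          apply Nat.add_le_add
          · have : (S \ ({a, b} : Finset V)).card - 1 = S.card - 3 := by omega
            rw [← this]; exact hIH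
          · rw [← hS'card]; exact hsum
      _ ≤ (eF G S).card := hcross
termination_by S.card
decreasing_by
  exact Finset.card_lt_card ⟨Finset.sdiff_subset, fun hsub => by
    have := hsub ha; simp at this⟩

lemma one_le_eF {V : Type*} [Fintype V] (G : SimpleGraph V) (T : Finset V) (u v : V)
    (hu : u ∈ T) (hv : v ∈ T) (hadj : G.Adj u v) : 1 ≤ (eF G T).card := by
  refine Finset.card_pos.mpr ⟨s(u, v), ?_⟩
  simp only [eF, Finset.mem_filter, mem_edgeFinset, mem_edgeSet]
  refine ⟨hadj, fun w hw => ?_⟩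
  rcases Sym2.mem_iff.mp hw with rfl | rfl
  · exact hu
  · exact hv

lemma lemma42 {V : Type*} [Fintype V] (G : SimpleGraph V) (S : Finset V)
    (h : ∀ T ⊆ S, T.card = 4 → 2 ≤ (eF G T).card) :
    (if S.card = 3 then 0 else (S.card - 1)^2/4) ≤ (eF G S).card := by
  by_cases hex : ∃ a ∈ S, ∃ b ∈ S, ∃ c ∈ S,
      a ≠ b ∧ a ≠ c ∧ b ≠ c ∧ ¬ G.Adj a b ∧ ¬ G.Adj a c ∧ ¬ G.Adj b c
  · obtain ⟨a, ha, b, hb, c, hc, hab, hac, hbc, nab, nac, nbc⟩ := hex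
    set A : Finset V := {a, b, c} with hA
    have hAS : A ⊆ S := by
      intro v hv
      simp only [hA, Finset.mem_insert, Finset.mem_singleton] at hv
      rcases hv with rfl | rfl | rfl
      · exact ha
      · exact hb
      · exact hc
    have hAcard : A.card = 3 := by
      rw [hA, Finset.card_insert_of_notMem (by simp [hab, hac]),
        Finset.card_insert_of_notMem (by simpa using hbc), Finset.card_singleton]
    have hm3 : 3 ≤ S.card := hAcard ▸ Finset.card_le_card hAS
    have hind : ∀ u ∈ A, ∀ v ∈ A, ¬ G.Adj u v := by
      intro u hu v hv
      simp only [hA, Finset.mem_insert, Finset.mem_singleton] at hu hv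
      rcases hu with rfl | rfl | rfl <;> rcases hv with rfl | rfl | rfl
      · exact G.loopless.irrefl _
      · exact nab
      · exact nac
      · exact fun h' => nab h'.symm
      · exact G.loopless.irrefl _
      · exact nbc
      · exact fun h' => nac h'.symm
      · exact fun h' => nbc h'.symm
      · exact G.loopless.irrefl _
    have hdeg : ∀ x ∈ S \ A, 2 ≤ (A.filter (G.Adj x)).card := by
      intro x hx
      have hxS := Finset.mem_sdiff.mp hx
      have hT : insert x A ⊆ S := by
        intro v hv
        rcases Finset.mem_insert.mp hv with rfl | hvA
        · exact hxS.1
        · exact hAS hvA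
      have hTcard : (insert x A).card = 4 := by
        rw [Finset.card_insert_of_notMem hxS.2, hAcard]
      exact le_trans (h _ hT hTcard) (degbound G A x hxS.2 hind)
    have hS'card : (S \ A).card = S.card - 3 := by
      rw [Finset.card_sdiff_of_subset hAS, hAcard]
    have hIH : (if (S \ A).card = 3 then 0 else ((S \ A).card - 1)^2/4) ≤ (eF G (S \ A)).card :=
      lemma42 G (S \ A) (fun T hT h4 => h T (hT.trans Finset.sdiff_subset) h4)
    have hIH' : (if S.card - 3 = 3 then 0 else (S.card - 4)^2/4) ≤ (eF G (S \ A)).card := by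
      have heq : (if (S \ A).card = 3 then 0 else ((S \ A).card - 1)^2/4)
          = (if S.card - 3 = 3 then 0 else (S.card - 4)^2/4) := by
        rw [hS'card, Nat.sub_sub]
      rw [← heq]; exact hIH
    have hsum : 2 * (S \ A).card ≤ ∑ x ∈ S \ A, (A.filter (G.Adj x)).card := by
      calc 2 * (S \ A).card = ∑ _x ∈ S \ A, 2 := by
            rw [Finset.sum_const, smul_eq_mul, mul_comm]
        _ ≤ _ := Finset.sum_le_sum hdeg
    have hcross := cross G S A hAS
    calc (if S.card = 3 then 0 else (S.card - 1)^2/4)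
        ≤ (if S.card - 3 = 3 then 0 else (S.card - 4)^2/4) + 2*(S.card - 3) := arith42 _ hm3
      _ ≤ (eF G (S \ A)).card + ∑ x ∈ S \ A, (A.filter (G.Adj x)).card := by
          apply Nat.add_le_add hIH'
          rw [← hS'card]; exact hsum
      _ ≤ (eF G S).card := hcross
  · push_neg at hex
    have h31 : ∀ T ⊆ S, T.card = 3 → 1 ≤ (eF G T).card := by
      intro T hT h3
      obtain ⟨a, b, c, hab, hac, hbc, rfl⟩ := Finset.card_eq_three.mp h3
      have ha : a ∈ S := hT (by simp)
      have hb : b ∈ S := hT (by simp)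
      have hc : c ∈ S := hT (by simp)
      by_cases pab : G.Adj a b
      · exact one_le_eF G _ a b (by simp) (by simp) pab
      · by_cases pac : G.Adj a c
        · exact one_le_eF G _ a c (by simp) (by simp) pac
        · have pbc : G.Adj b c := hex a ha b hb c hc hab hac hbc pab pac
          exact one_le_eF G _ b c (by simp) (by simp) pbc
    have := lemma31 G S h31
    split_ifs with h3
    · exact Nat.zero_le _
    · exact this
termination_by S.card
decreasing_by
  exact Finset.card_lt_card ⟨Finset.sdiff_subset, fun hsub => by
    have := hsub ha; simp [hA] at this⟩


/-- Every [4,2]-graph of order n has at least ⌊(n-1)²/4⌋ edges. -/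
theorem stmt_10 {V : Type*} [Fintype V] (G : SimpleGraph V)
    (h42 : IsSTGraph G 4 2) :
    (Fintype.card V - 1) ^ 2 / 4 ≤ G.edgeSet.ncard := by
  have hmain := lemma42 G Finset.univ (fun T _ h4 => by
    have := h42.2 T h4
    rwa [edgesWithin_eq] at this)
  rw [Finset.card_univ] at hmain
  have hn : 4 ≤ Fintype.card V := h42.1
  rw [if_neg (by omega)] at hmain
  have hE : G.edgeSet.ncard = (eF G Finset.univ).card := by
    rw [← Set.ncard_coe_finset]
    congr 1
    ext e
    simp [eF]
  rw [hE]
  exact hmain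
end

section
/- For n ≥ 7, a [4,2]-graph of order n has exactly ⌊(n−1)²/4⌋ edges if and only if it is isomorphic to the disjoint union K_{⌊n/2⌋} + K_{⌈n/2⌉} of two complete graphs. -/
set_option linter.unusedSectionVars false
set_option maxHeartbeats 1600000

open SimpleGraph

open Finset

section Aux

variable {V : Type*} [Fintype V] [DecidableEq V]

/-- The subgraph of `H` spanned inside `S`, as a graph on `V`. -/
def gw (H : SimpleGraph V) (S : Finset V) : SimpleGraph V where
  Adj u v := H.Adj u v ∧ u ∈ S ∧ v ∈ S
  symm := ⟨by rintro u v ⟨h, hu, hv⟩; exact ⟨h.symm, hv, hu⟩⟩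
  loopless := ⟨fun v h => H.loopless.irrefl v h.1⟩

instance (H : SimpleGraph V) [DecidableRel H.Adj] (S : Finset V) :
    DecidableRel (gw H S).Adj :=
  fun u v => inferInstanceAs (Decidable (H.Adj u v ∧ u ∈ S ∧ v ∈ S))

lemma gw_adj (H : SimpleGraph V) (S : Finset V) {u v : V} :
    (gw H S).Adj u v ↔ H.Adj u v ∧ u ∈ S ∧ v ∈ S := Iff.rfl

lemma gw_univ (H : SimpleGraph V) : gw H univ = H := by
  ext u v; simp [gw_adj]

lemma edgesWithin_eq_s11 (H : SimpleGraph V) [DecidableRel H.Adj] (S : Finset V) :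
    edgesWithin H S = #(gw H S).edgeFinset := by
  rw [edgesWithin, ← Set.ncard_coe_finset]
  congr 1
  rw [coe_edgeFinset]
  ext e
  induction e with
  | _ u v =>
    simp only [Set.mem_setOf_eq, mem_edgeSet, gw_adj]
    constructor
    · rintro ⟨h, hS⟩; exact ⟨h, hS u (by simp), hS v (by simp)⟩
    · rintro ⟨h, hu, hv⟩
      refine ⟨h, fun x hx => ?_⟩
      rcases Sym2.mem_iff.1 hx with rfl | rfl <;> assumption

lemma ncard_edgeSet (G : SimpleGraph V) [DecidableRel G.Adj] :
    G.edgeSet.ncard = #G.edgeFinset := by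
  rw [← coe_edgeFinset, Set.ncard_coe_finset]

lemma gw_nbhd {S : Finset V} {v : V} (hv : v ∈ S) :
    (gw (⊤ : SimpleGraph V) S).neighborFinset v = S.erase v := by
  ext w
  simp only [mem_neighborFinset, gw_adj, top_adj, mem_erase]
  constructor
  · rintro ⟨h, _, hw⟩; exact ⟨h.symm, hw⟩
  · rintro ⟨h, hw⟩; exact ⟨h.symm, hv, hw⟩

lemma gw_nbhd_not {S : Finset V} {v : V} (hv : v ∉ S) :
    (gw (⊤ : SimpleGraph V) S).neighborFinset v = ∅ := by
  ext w
  simp only [mem_neighborFinset, gw_adj, top_adj, Finset.notMem_empty, iff_false]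
  rintro ⟨-, hv', -⟩; exact hv hv'

lemma gw_top_count (S : Finset V) :
    2 * #(gw (⊤ : SimpleGraph V) S).edgeFinset = #S * (#S - 1) := by
  rw [← sum_degrees_eq_twice_card_edges]
  have : ∀ v : V, (gw (⊤ : SimpleGraph V) S).degree v = if v ∈ S then #S - 1 else 0 := by
    intro v
    by_cases hv : v ∈ S
    · rw [degree, gw_nbhd hv, card_erase_of_mem hv, if_pos hv]
    · rw [degree, gw_nbhd_not hv, if_neg hv, card_empty]
  simp only [this]
  rw [Finset.sum_ite_mem, univ_inter, Finset.sum_const, smul_eq_mul]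

lemma gw_count_le (H : SimpleGraph V) [DecidableRel H.Adj] (S : Finset V) :
    2 * #(gw H S).edgeFinset ≤ #S * (#S - 1) := by
  rw [← gw_top_count S]
  have : gw H S ≤ gw (⊤ : SimpleGraph V) S := by
    rintro u v ⟨h, hu, hv⟩; exact ⟨h.ne, hu, hv⟩
  exact Nat.mul_le_mul_left 2 (card_le_card (edgeFinset_subset_edgeFinset.2 this))

/-- The "cross" graph of `H`-edges between `T` and `U`. -/
def cg (H : SimpleGraph V) (T U : Finset V) : SimpleGraph V where
  Adj u v := H.Adj u v ∧ ((u ∈ T ∧ v ∈ U) ∨ (u ∈ U ∧ v ∈ T))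
  symm := ⟨by rintro u v ⟨h, hc⟩; exact ⟨h.symm, by tauto⟩⟩
  loopless := ⟨fun v h => H.loopless.irrefl v h.1⟩

instance (H : SimpleGraph V) [DecidableRel H.Adj] (T U : Finset V) :
    DecidableRel (cg H T U).Adj :=
  fun u v => inferInstanceAs (Decidable (H.Adj u v ∧ _))

lemma gw_split (H : SimpleGraph V) [DecidableRel H.Adj] {T S : Finset V} (hTS : T ⊆ S) :
    #(gw H S).edgeFinset
      = #(gw H T).edgeFinset + #(gw H (S \ T)).edgeFinset + #(cg H T (S \ T)).edgeFinset := by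
  have hg : gw H S = (gw H T ⊔ gw H (S \ T)) ⊔ cg H T (S \ T) := by
    ext u v
    simp only [sup_adj, gw_adj, cg, mem_sdiff]
    have hT := fun x (h : x ∈ T) => hTS h
    constructor
    · rintro ⟨h, hu, hv⟩
      by_cases huT : u ∈ T <;> by_cases hvT : v ∈ T <;> tauto
    · rintro (⟨h, hu, hv⟩ | ⟨h, hu, hv⟩) <;> try tauto
  have d1 : Disjoint (gw H T).edgeFinset (gw H (S \ T)).edgeFinset := by
    rw [Finset.disjoint_left]
    intro e h1 h2
    induction e with
    | _ u v =>
      rw [mem_edgeFinset, mem_edgeSet] at h1 h2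
      exact (mem_sdiff.1 h2.2.1).2 h1.2.1
  have d2 : Disjoint ((gw H T) ⊔ (gw H (S \ T))).edgeFinset (cg H T (S \ T)).edgeFinset := by
    rw [Finset.disjoint_left]
    intro e h1 h2
    induction e with
    | _ u v =>
      rw [mem_edgeFinset, mem_edgeSet] at h1 h2
      obtain ⟨-, (⟨hu, hv⟩ | ⟨hu, hv⟩)⟩ := h2
      · rcases h1 with ⟨-, -, hv'⟩ | ⟨-, hu', -⟩
        · exact (mem_sdiff.1 hv).2 hv'
        · exact (mem_sdiff.1 hu').2 hu
      · rcases h1 with ⟨-, hu', -⟩ | ⟨-, -, hv'⟩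
        · exact (mem_sdiff.1 hu).2 hu'
        · exact (mem_sdiff.1 hv').2 hv
  have hfe : (gw H S).edgeFinset = ((gw H T ⊔ gw H (S \ T)) ⊔ cg H T (S \ T)).edgeFinset :=
    edgeFinset_inj.mpr hg
  calc #(gw H S).edgeFinset = #((gw H T ⊔ gw H (S \ T)) ⊔ cg H T (S \ T)).edgeFinset := by
        rw [hfe]
    _ = #(gw H T ⊔ gw H (S \ T)).edgeFinset + #(cg H T (S \ T)).edgeFinset := by
        rw [edgeFinset_sup, card_union_of_disjoint d2]
    _ = _ := by rw [edgeFinset_sup, card_union_of_disjoint d1]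

lemma cg_bound (H : SimpleGraph V) [DecidableRel H.Adj] {T U : Finset V}
    (hone : ∀ w ∈ U, ∀ t1 ∈ T, ∀ t2 ∈ T, H.Adj w t1 → H.Adj w t2 → t1 = t2) :
    #(cg H T U).edgeFinset ≤ #U := by
  have h2 : 2 * #(cg H T U).edgeFinset
      = #(univ.filter fun x : V × V => (cg H T U).Adj x.1 x.2) := by
    rw [two_mul_card_edgeFinset]
  have hsub : (univ.filter fun (x : V × V) => (cg H T U).Adj x.1 x.2) ⊆
      (univ.filter fun x : V × V => H.Adj x.1 x.2 ∧ x.1 ∈ T ∧ x.2 ∈ U) ∪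
      (univ.filter fun x : V × V => H.Adj x.1 x.2 ∧ x.1 ∈ U ∧ x.2 ∈ T) := by
    intro p hp
    simp only [mem_filter, mem_union, mem_univ, true_and] at hp ⊢
    obtain ⟨h, hc | hc⟩ := hp
    · exact Or.inl ⟨h, hc⟩
    · exact Or.inr ⟨h, hc⟩
  have c1 : #(univ.filter fun x : V × V => H.Adj x.1 x.2 ∧ x.1 ∈ T ∧ x.2 ∈ U) ≤ #U := by
    apply card_le_card_of_injOn (fun p => p.2)
    · intro p hp; simp only [mem_coe, mem_filter] at hp; exact hp.2.2.2
    · rintro ⟨p1, p2⟩ hp ⟨q1, q2⟩ hq hpq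
      simp only [mem_coe, mem_filter] at hp hq
      simp only at hpq
      subst hpq
      have := hone p2 hp.2.2.2 p1 hp.2.2.1 q1 hq.2.2.1 hp.2.1.symm hq.2.1.symm
      simp [this]
  have c2 : #(univ.filter fun x : V × V => H.Adj x.1 x.2 ∧ x.1 ∈ U ∧ x.2 ∈ T) ≤ #U := by
    apply card_le_card_of_injOn (fun p => p.1)
    · intro p hp; simp only [mem_coe, mem_filter] at hp; exact hp.2.2.1
    · rintro ⟨p1, p2⟩ hp ⟨q1, q2⟩ hq hpq
      simp only [mem_coe, mem_filter] at hp hq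
      simp only at hpq
      subst hpq
      have := hone p1 hp.2.2.1 p2 hp.2.2.2 q2 hq.2.2.2 hp.2.1 hq.2.1
      simp [this]
  have := (card_le_card hsub).trans ((card_union_le _ _).trans (Nat.add_le_add c1 c2))
  omega

/-- In a graph where every 4-set spans at most 4 edges, any vertex outside a
triangle has at most one neighbour on the triangle. -/
lemma one_nb (H : SimpleGraph V) [DecidableRel H.Adj]
    (hP : ∀ W : Finset V, #W = 4 → #(gw H W).edgeFinset ≤ 4)
    {x y z : V} (hxy : H.Adj x y) (hxz : H.Adj x z) (hyz : H.Adj y z) :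
    ∀ w ∉ ({x, y, z} : Finset V), ∀ t1 ∈ ({x, y, z} : Finset V),
      ∀ t2 ∈ ({x, y, z} : Finset V), H.Adj w t1 → H.Adj w t2 → t1 = t2 := by
  intro w hw t1 ht1 t2 ht2 h1 h2
  by_contra hne
  have hxyne : x ≠ y := hxy.ne
  have hxzne : x ≠ z := hxz.ne
  have hyzne : y ≠ z := hyz.ne
  set T : Finset V := {x, y, z} with hT
  have hcardT : #T = 3 := by
    rw [hT, card_insert_of_notMem (by simp [hxyne, hxzne]),
      card_insert_of_notMem (by simp [hyzne]), card_singleton]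
  set W : Finset V := insert w T with hW
  have hTW : T ⊆ W := subset_insert _ _
  have hcardW : #W = 4 := by rw [hW, card_insert_of_notMem hw, hcardT]
  have hWT : W \ T = {w} := by
    rw [hW, insert_sdiff_of_notMem _ hw]
    simp
  have hsplit := gw_split H hTW
  have h3 : 3 ≤ #(gw H T).edgeFinset := by
    have hsub : {s(x, y), s(x, z), s(y, z)} ⊆ (gw H T).edgeFinset := by
      intro e he
      simp only [mem_insert, mem_singleton] at he
      rcases he with rfl | rfl | rfl <;>
        · rw [mem_edgeFinset, mem_edgeSet, gw_adj]
          refine ⟨by assumption, by simp [hT], by simp [hT]⟩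
    have hc : #({s(x, y), s(x, z), s(y, z)} : Finset (Sym2 V)) = 3 := by
      rw [card_insert_of_notMem, card_insert_of_notMem, card_singleton]
      · simp only [mem_singleton, Sym2.eq_iff]
        tauto
      · simp only [mem_insert, mem_singleton, Sym2.eq_iff]
        tauto
    calc 3 = #({s(x, y), s(x, z), s(y, z)} : Finset (Sym2 V)) := hc.symm
      _ ≤ _ := card_le_card hsub
  have h2' : 2 ≤ #(cg H T (W \ T)).edgeFinset := by
    have hsub : {s(w, t1), s(w, t2)} ⊆ (cg H T (W \ T)).edgeFinset := by
      intro e he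
      simp only [mem_insert, mem_singleton] at he
      have hwmem : w ∈ W \ T := by rw [hWT]; simp
      rcases he with rfl | rfl
      · rw [mem_edgeFinset, mem_edgeSet]
        exact ⟨h1, Or.inr ⟨hwmem, ht1⟩⟩
      · rw [mem_edgeFinset, mem_edgeSet]
        exact ⟨h2, Or.inr ⟨hwmem, ht2⟩⟩
    have hwt1 : w ≠ t1 := fun h => H.loopless.irrefl t1 (h ▸ h1)
    have hc : #({s(w, t1), s(w, t2)} : Finset (Sym2 V)) = 2 := by
      rw [card_insert_of_notMem, card_singleton]
      simp only [mem_singleton, Sym2.eq_iff]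
      rintro (⟨-, h⟩ | ⟨h, h'⟩)
      · exact hne h
      · exact hwt1 h'.symm
    calc 2 = #({s(w, t1), s(w, t2)} : Finset (Sym2 V)) := hc.symm
      _ ≤ _ := card_le_card hsub
  have := hP W hcardW
  omega

lemma edgeFinset_card_zero (G : SimpleGraph V) [DecidableRel G.Adj]
    (h : ∀ u v, ¬ G.Adj u v) : #G.edgeFinset = 0 := by
  have : G = ⊥ := by ext u v; simp [h]
  subst this
  simp

/-- Mantel's bound for the part of `H` within `S`. -/
lemma mantel_within (H : SimpleGraph V) [DecidableRel H.Adj] (S : Finset V)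
    (htf : ∀ a ∈ S, ∀ b ∈ S, ∀ c ∈ S, H.Adj a b → H.Adj a c → H.Adj b c → False) :
    4 * #(gw H S).edgeFinset ≤ #S ^ 2 := by
  induction S using Finset.strongInduction with
  | _ S ih =>
  by_cases hex : ∃ u v, (gw H S).Adj u v
  · obtain ⟨u, v, huv⟩ := hex
    obtain ⟨hadj, huS, hvS⟩ := huv
    have hne : u ≠ v := hadj.ne
    set T : Finset V := {u, v} with hT
    have hTS : T ⊆ S := by simp [hT, insert_subset_iff, huS, hvS]
    have hcT : #T = 2 := by rw [hT, card_insert_of_notMem (by simp [hne]), card_singleton]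
    have hSs : 2 ≤ #S := hcT ▸ card_le_card hTS
    have hsplit := gw_split H hTS
    have h1 : 2 * #(gw H T).edgeFinset ≤ 2 := by
      have := gw_count_le H T; rw [hcT] at this; omega
    have hcross : #(cg H T (S \ T)).edgeFinset ≤ #(S \ T) := by
      apply cg_bound
      intro w hw t1 ht1 t2 ht2 hw1 hw2
      by_contra hne'
      have hwS : w ∈ S := (mem_sdiff.1 hw).1
      simp only [hT, mem_insert, mem_singleton] at ht1 ht2
      have hwu : H.Adj w u ∧ H.Adj w v := by
        rcases ht1 with rfl | rfl <;> rcases ht2 with rfl | rfl <;>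
          first | (exact absurd rfl hne') | exact ⟨by assumption, by assumption⟩
      exact htf w hwS u huS v hvS hwu.1 hwu.2 hadj
    have hrest : 4 * #(gw H (S \ T)).edgeFinset ≤ #(S \ T) ^ 2 := by
      apply ih _ (sdiff_ssubset hTS ⟨u, by simp [hT]⟩)
      intro a ha b hb c hc
      exact htf a (mem_sdiff.1 ha).1 b (mem_sdiff.1 hb).1 c (mem_sdiff.1 hc).1
    have hcSd : #(S \ T) = #S - 2 := by rw [card_sdiff_of_subset hTS, hcT]
    rw [hcSd] at hcross hrest
    obtain ⟨j, hj⟩ : ∃ j, #S = j + 2 := ⟨#S - 2, by omega⟩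
    rw [hj] at hrest hcross ⊢
    have e2 : j + 2 - 2 = j := by omega
    rw [e2] at hrest hcross
    have e1 : (j + 2) ^ 2 = j ^ 2 + 4 * j + 4 := by ring
    omega
  · push_neg at hex
    rw [edgeFinset_card_zero _ hex]
    simp

/-- The main bound: in a graph where every 4-set spans at most 4 edges, any
set `S` with at least 4 vertices spans at most `#S^2/4` edges. -/
lemma main_bound (H : SimpleGraph V) [DecidableRel H.Adj]
    (hP : ∀ W : Finset V, #W = 4 → #(gw H W).edgeFinset ≤ 4) :
    ∀ S : Finset V, 4 ≤ #S → 4 * #(gw H S).edgeFinset ≤ #S ^ 2 := by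
  intro S
  induction S using Finset.strongInduction with
  | _ S ih =>
  intro hS4
  by_cases htf : ∀ a ∈ S, ∀ b ∈ S, ∀ c ∈ S, H.Adj a b → H.Adj a c → H.Adj b c → False
  · exact mantel_within H S htf
  · push_neg at htf
    obtain ⟨x, hxS, y, hyS, z, hzS, hxy, hxz, hyz, -⟩ := htf
    set T : Finset V := {x, y, z} with hT
    have hTS : T ⊆ S := by simp [hT, insert_subset_iff, hxS, hyS, hzS]
    have hcT : #T = 3 := by
      rw [hT, card_insert_of_notMem (by simp [hxy.ne, hxz.ne]),
        card_insert_of_notMem (by simp [hyz.ne]), card_singleton]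
    have hsplit := gw_split H hTS
    have h1 : 2 * #(gw H T).edgeFinset ≤ 6 := by
      have := gw_count_le H T; rw [hcT] at this; omega
    have hcross : #(cg H T (S \ T)).edgeFinset ≤ #(S \ T) := by
      apply cg_bound
      intro w hw
      exact one_nb H hP hxy hxz hyz w (mem_sdiff.1 hw).2
    have hcSd : #(S \ T) = #S - 3 := by rw [card_sdiff_of_subset hTS, hcT]
    by_cases h7 : 7 ≤ #S
    · have hrest : 4 * #(gw H (S \ T)).edgeFinset ≤ #(S \ T) ^ 2 := by
        apply ih _ (sdiff_ssubset hTS ⟨x, by simp [hT]⟩)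
        omega
      rw [hcSd] at hcross hrest
      obtain ⟨j, hj⟩ : ∃ j, #S = j + 3 ∧ 4 ≤ j := ⟨#S - 3, by omega⟩
      rw [hj.1] at hrest hcross ⊢
      have e2 : j + 3 - 3 = j := by omega
      rw [e2] at hrest hcross
      have e1 : (j + 3) ^ 2 = j ^ 2 + 6 * j + 9 := by ring
      have hj4 := hj.2
      omega
    · have hrest : 2 * #(gw H (S \ T)).edgeFinset ≤ (#S - 3) * (#S - 3 - 1) := by
        have := gw_count_le H (S \ T); rw [hcSd] at this; exact this
      rw [hcSd] at hcross
      have hc : #S = 4 ∨ #S = 5 ∨ #S = 6 := by omega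
      rcases hc with hc | hc | hc <;> rw [hc] at hrest hcross ⊢ <;>
        rw [pow_two] <;> omega

/-- Strict version: if `S` (with at least 7 vertices) contains a triangle then
the bound is strict. -/
lemma strict_bound (H : SimpleGraph V) [DecidableRel H.Adj]
    (hP : ∀ W : Finset V, #W = 4 → #(gw H W).edgeFinset ≤ 4)
    (S : Finset V) (h7 : 7 ≤ #S) {x y z : V} (hxS : x ∈ S) (hyS : y ∈ S) (hzS : z ∈ S)
    (hxy : H.Adj x y) (hxz : H.Adj x z) (hyz : H.Adj y z) :
    4 * #(gw H S).edgeFinset + 4 ≤ #S ^ 2 := by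
  set T : Finset V := {x, y, z} with hT
  have hTS : T ⊆ S := by simp [hT, insert_subset_iff, hxS, hyS, hzS]
  have hcT : #T = 3 := by
    rw [hT, card_insert_of_notMem (by simp [hxy.ne, hxz.ne]),
      card_insert_of_notMem (by simp [hyz.ne]), card_singleton]
  have hsplit := gw_split H hTS
  have h1 : 2 * #(gw H T).edgeFinset ≤ 6 := by
    have := gw_count_le H T; rw [hcT] at this; omega
  have hcross : #(cg H T (S \ T)).edgeFinset ≤ #(S \ T) := by
    apply cg_bound
    intro w hw
    exact one_nb H hP hxy hxz hyz w (mem_sdiff.1 hw).2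
  have hcSd : #(S \ T) = #S - 3 := by rw [card_sdiff_of_subset hTS, hcT]
  have hrest : 4 * #(gw H (S \ T)).edgeFinset ≤ #(S \ T) ^ 2 :=
    main_bound H hP (S \ T) (by omega)
  rw [hcSd] at hcross hrest
  obtain ⟨j, hj⟩ : ∃ j, #S = j + 3 ∧ 4 ≤ j := ⟨#S - 3, by omega⟩
  rw [hj.1] at hrest hcross ⊢
  have e2 : j + 3 - 3 = j := by omega
  rw [e2] at hrest hcross
  have e1 : (j + 3) ^ 2 = j ^ 2 + 6 * j + 9 := by ring
  have hj4 := hj.2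
  omega

lemma gw_compl (G : SimpleGraph V) [DecidableRel G.Adj] (S : Finset V) :
    #(gw G S).edgeFinset + #(gw Gᶜ S).edgeFinset
      = #(gw (⊤ : SimpleGraph V) S).edgeFinset := by
  have hg : gw (⊤ : SimpleGraph V) S = gw G S ⊔ gw Gᶜ S := by
    ext u v
    simp only [gw_adj, sup_adj, top_adj, compl_adj]
    constructor
    · rintro ⟨h, hu, hv⟩
      by_cases hG : G.Adj u v
      · exact Or.inl ⟨hG, hu, hv⟩
      · exact Or.inr ⟨⟨h, hG⟩, hu, hv⟩
    · rintro (⟨h, hu, hv⟩ | ⟨⟨h, -⟩, hu, hv⟩) <;> exact ⟨by first | exact h.ne | exact h, hu, hv⟩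
  have hd : Disjoint (gw G S).edgeFinset (gw Gᶜ S).edgeFinset := by
    rw [Finset.disjoint_left]
    intro e h1 h2
    induction e with
    | _ u v =>
      rw [mem_edgeFinset, mem_edgeSet] at h1 h2
      exact h2.1.2 h1.1
  have hfe : (gw (⊤ : SimpleGraph V) S).edgeFinset = (gw G S ⊔ gw Gᶜ S).edgeFinset :=
    edgeFinset_inj.mpr hg
  rw [hfe, edgeFinset_sup, card_union_of_disjoint hd]

lemma partition_count (G : SimpleGraph V) [DecidableRel G.Adj] {A B : Finset V}
    (hd : Disjoint A B) (hu : A ∪ B = univ)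
    (hA : G.IsClique (A : Set V)) (hB : G.IsClique (B : Set V))
    (hno : ∀ a ∈ A, ∀ b ∈ B, ¬ G.Adj a b) :
    2 * #G.edgeFinset = #A * (#A - 1) + #B * (#B - 1) := by
  have hnbA : ∀ v ∈ A, G.neighborFinset v = A.erase v := by
    intro v hv
    ext w
    simp only [mem_neighborFinset, mem_erase]
    constructor
    · intro h
      have hw : w ∈ A := by
        by_contra hwA
        have : w ∈ B := by
          have := Finset.mem_univ w
          rw [← hu, mem_union] at this; tauto
        exact hno v hv w this h
      exact ⟨h.ne', hw⟩
    · rintro ⟨hne, hw⟩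
      exact hA hv hw (Ne.symm hne)
  have hnbB : ∀ v ∈ B, G.neighborFinset v = B.erase v := by
    intro v hv
    ext w
    simp only [mem_neighborFinset, mem_erase]
    constructor
    · intro h
      have hw : w ∈ B := by
        by_contra hwB
        have : w ∈ A := by
          have := Finset.mem_univ w
          rw [← hu, mem_union] at this; tauto
        exact hno w this v hv h.symm
      exact ⟨h.ne', hw⟩
    · rintro ⟨hne, hw⟩
      exact hB hv hw (Ne.symm hne)
  rw [← sum_degrees_eq_twice_card_edges, show (univ : Finset V) = A ∪ B from hu.symm,
    sum_union hd]
  congr 1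
  · rw [Finset.sum_congr rfl (fun v hv => by rw [degree, hnbA v hv, card_erase_of_mem hv]),
      Finset.sum_const, smul_eq_mul]
  · rw [Finset.sum_congr rfl (fun v hv => by rw [degree, hnbB v hv, card_erase_of_mem hv]),
      Finset.sum_const, smul_eq_mul]

lemma nat_compl (k eG eH : ℕ) (hsum : 2 * (eG + eH) = (k + 1) * k) (hG : eG = k ^ 2 / 4) :
    eH = (k + 1) ^ 2 / 4 := by
  rcases Nat.even_or_odd k with ⟨m, hm⟩ | ⟨m, hm⟩ <;> subst hm
  · have e1 : (m + m) ^ 2 = 4 * (m * m) := by ring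
    have e2 : (m + m + 1) ^ 2 = 4 * (m * m) + 4 * m + 1 := by ring
    have e3 : (m + m + 1) * (m + m) = 4 * (m * m) + 2 * m := by ring
    omega
  · have e1 : (2 * m + 1) ^ 2 = 4 * (m * m) + 4 * m + 1 := by ring
    have e2 : (2 * m + 1 + 1) ^ 2 = 4 * (m * m) + 8 * m + 4 := by ring
    have e3 : (2 * m + 1 + 1) * (2 * m + 1) = 4 * (m * m) + 6 * m + 2 := by ring
    omega

lemma nat_rev (n e : ℕ) (hn : 7 ≤ n)
    (h : 2 * e = n / 2 * (n / 2 - 1) + (n + 1) / 2 * ((n + 1) / 2 - 1)) :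
    e = (n - 1) ^ 2 / 4 := by
  rcases Nat.even_or_odd n with ⟨m, hm⟩ | ⟨m, hm⟩ <;> subst hm
  · obtain ⟨p, rfl⟩ : ∃ p, m = p + 1 := ⟨m - 1, by omega⟩
    have d1 : (p + 1 + (p + 1)) / 2 = p + 1 := by omega
    have d2 : (p + 1 + (p + 1) + 1) / 2 = p + 1 := by omega
    rw [d1, d2] at h
    have d3 : p + 1 - 1 = p := rfl
    rw [d3] at h
    have e1 : (p + 1 + (p + 1) - 1) ^ 2 = 4 * (p * p) + 4 * p + 1 := by
      have : p + 1 + (p + 1) - 1 = 2 * p + 1 := by omega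
      rw [this]; ring
    have e2 : (p + 1) * p = p * p + p := by ring
    omega
  · obtain ⟨p, rfl⟩ : ∃ p, m = p + 1 := ⟨m - 1, by omega⟩
    have d1 : (2 * (p + 1) + 1) / 2 = p + 1 := by omega
    have d2 : (2 * (p + 1) + 1 + 1) / 2 = p + 2 := by omega
    rw [d1, d2] at h
    have d3 : p + 1 - 1 = p := rfl
    have d4 : p + 2 - 1 = p + 1 := rfl
    rw [d3, d4] at h
    have e1 : (2 * (p + 1) + 1 - 1) ^ 2 = 4 * (p * p) + 8 * p + 4 := by
      have : 2 * (p + 1) + 1 - 1 = 2 * p + 2 := by omega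
      rw [this]; ring
    have e2 : (p + 1) * p = p * p + p := by ring
    have e3 : (p + 2) * (p + 1) = p * p + 3 * p + 2 := by ring
    omega

lemma range_odd_card (n : ℕ) : #((range n).filter fun m => m % 2 = 1) = n / 2 := by
  induction n with
  | zero => simp
  | succ k ih =>
    rw [range_add_one, filter_insert]
    by_cases h : k % 2 = 1
    · rw [if_pos h, card_insert_of_notMem (by simp)]
      omega
    · rw [if_neg h]
      omega

lemma range_even_card (n : ℕ) : #((range n).filter fun m => m % 2 = 0) = (n + 1) / 2 := by
  induction n with
  | zero => simp
  | succ k ih =>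
    rw [range_add_one, filter_insert]
    by_cases h : k % 2 = 0
    · rw [if_pos h, card_insert_of_notMem (by simp)]
      omega
    · rw [if_neg h]
      omega

lemma fin_filter_card (n : ℕ) (p : ℕ → Prop) [DecidablePred p] :
    #(univ.filter fun i : Fin n => p i.val) = #((range n).filter p) := by
  rw [show (range n) = Finset.Iio n from by rw [Nat.Iio_eq_range],
    ← Fin.map_valEmbedding_univ, filter_map, card_map]
  rfl

end Aux

/-- For n ≥ 7, a [4,2]-graph of order n has exactly ⌊(n-1)²/4⌋ edges iff it is
the disjoint union of two complete graphs K_{⌊n/2⌋} + K_{⌈n/2⌉}. -/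
theorem stmt_11 {V : Type*} [Fintype V] [DecidableEq V] (G : SimpleGraph V)
    (h42 : IsSTGraph G 4 2) (hn : 7 ≤ Fintype.card V) :
    G.edgeSet.ncard = (Fintype.card V - 1) ^ 2 / 4 ↔
      ∃ A B : Finset V, Disjoint A B ∧ A ∪ B = Finset.univ ∧
        A.card = Fintype.card V / 2 ∧ B.card = (Fintype.card V + 1) / 2 ∧
        G.IsClique (A : Set V) ∧ G.IsClique (B : Set V) ∧
        ∀ a ∈ A, ∀ b ∈ B, ¬ G.Adj a b := by
  classical
  set n := Fintype.card V with hncard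
  have hcu : #(Finset.univ : Finset V) = n := Finset.card_univ
  -- the key 4-set property of the complement
  have hP : ∀ W : Finset V, #W = 4 → #(gw Gᶜ W).edgeFinset ≤ 4 := by
    intro W hW
    have h2 := h42.2 W hW
    rw [edgesWithin_eq_s11] at h2
    have hsplit := gw_compl G W
    have htop := gw_top_count (V := V) W
    rw [hW] at htop
    omega
  constructor
  · intro he
    rw [ncard_edgeSet] at he
    -- edge count of the complement
    have htot : #(gw G Finset.univ).edgeFinset + #(gw Gᶜ Finset.univ).edgeFinset
        = #(gw (⊤ : SimpleGraph V) Finset.univ).edgeFinset := gw_compl G Finset.univ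
    have htop := gw_top_count (V := V) Finset.univ
    rw [hcu] at htop
    have hgG : #(gw G Finset.univ).edgeFinset = #G.edgeFinset := by
      rw [edgeFinset_inj.mpr (gw_univ G)]
    have hgGc : #(gw Gᶜ Finset.univ).edgeFinset = #Gᶜ.edgeFinset := by
      rw [edgeFinset_inj.mpr (gw_univ Gᶜ)]
    have hH : #Gᶜ.edgeFinset = n ^ 2 / 4 := by
      obtain ⟨k, hk⟩ : ∃ k, n = k + 1 := ⟨n - 1, by omega⟩
      have hsum : 2 * (#G.edgeFinset + #Gᶜ.edgeFinset) = (k + 1) * k := by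
        calc 2 * (#G.edgeFinset + #Gᶜ.edgeFinset)
            = 2 * #(gw (⊤ : SimpleGraph V) Finset.univ).edgeFinset := by
              rw [← htot, hgG, hgGc]
          _ = n * (n - 1) := htop
          _ = (k + 1) * k := by rw [hk, Nat.add_sub_cancel]
      have hG' : #G.edgeFinset = k ^ 2 / 4 := by rw [he, hk, Nat.add_sub_cancel]
      rw [hk]
      exact nat_compl k _ _ hsum hG'
    -- the complement is triangle-free
    have hcf : Gᶜ.CliqueFree 3 := by
      intro t htc
      rw [is3Clique_iff] at htc
      obtain ⟨a, b, c, hab, hac, hbc, rfl⟩ := htc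
      have := strict_bound Gᶜ hP Finset.univ (by rw [hcu]; exact hn)
        (Finset.mem_univ a) (Finset.mem_univ b) (Finset.mem_univ c) hab hac hbc
      rw [edgeFinset_inj.mpr (gw_univ Gᶜ), hcu, hH] at this
      have hsq : 4 * (n ^ 2 / 4) + 4 ≤ n ^ 2 := this
      omega
    -- the complement is Turán-maximal
    have htm : Gᶜ.IsTuranMaximal 2 := by
      refine ⟨hcf, fun H' _ hcf' => ?_⟩
      have htfH' : ∀ a ∈ (Finset.univ : Finset V), ∀ b ∈ (Finset.univ : Finset V),
          ∀ c ∈ (Finset.univ : Finset V),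
          H'.Adj a b → H'.Adj a c → H'.Adj b c → False := by
        intro a _ b _ c _ h1 h2 h3
        exact hcf' {a, b, c} (is3Clique_iff.mpr ⟨a, b, c, h1, h2, h3, rfl⟩)
      have := mantel_within H' Finset.univ htfH'
      rw [edgeFinset_inj.mpr (gw_univ H'), hcu] at this
      omega
    obtain ⟨f⟩ := htm.nonempty_iso_turanGraph
    rw [← hncard] at f
    refine ⟨Finset.univ.filter fun v => (f v : ℕ) % 2 = 1,
      Finset.univ.filter fun v => (f v : ℕ) % 2 = 0, ?_, ?_, ?_, ?_, ?_, ?_, ?_⟩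
    · rw [Finset.disjoint_left]
      intro a ha hb
      simp only [Finset.mem_filter] at ha hb
      omega
    · ext v
      simp only [Finset.mem_union, Finset.mem_filter, Finset.mem_univ, true_and, iff_true]
      omega
    · have hA : #(Finset.univ.filter fun v => (f v : ℕ) % 2 = 1)
          = #(Finset.univ.filter fun i : Fin n => (i : ℕ) % 2 = 1) :=
        Finset.card_equiv f.toEquiv (fun v => by
          simp only [Finset.mem_filter, Finset.mem_univ, true_and]
          exact Iff.rfl)
      rw [hA, fin_filter_card n (fun m => m % 2 = 1), range_odd_card]
    · have hB : #(Finset.univ.filter fun v => (f v : ℕ) % 2 = 0)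
          = #(Finset.univ.filter fun i : Fin n => (i : ℕ) % 2 = 0) :=
        Finset.card_equiv f.toEquiv (fun v => by
          simp only [Finset.mem_filter, Finset.mem_univ, true_and]
          exact Iff.rfl)
      rw [hB, fin_filter_card n (fun m => m % 2 = 0), range_even_card]
    · intro a ha b hb hne
      simp only [Finset.coe_filter, Set.mem_setOf_eq] at ha hb
      by_contra hadj
      have hc : Gᶜ.Adj a b := ⟨hne, hadj⟩
      have := f.map_adj_iff.mpr hc
      have h' : (f a : ℕ) % 2 ≠ (f b : ℕ) % 2 := this
      omega
    · intro a ha b hb hne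
      simp only [Finset.coe_filter, Set.mem_setOf_eq] at ha hb
      by_contra hadj
      have hc : Gᶜ.Adj a b := ⟨hne, hadj⟩
      have := f.map_adj_iff.mpr hc
      have h' : (f a : ℕ) % 2 ≠ (f b : ℕ) % 2 := this
      omega
    · intro a ha b hb hadj
      simp only [Finset.mem_filter] at ha hb
      have hc : ¬ Gᶜ.Adj a b := fun h => h.2 hadj
      have := fun h => hc (f.map_adj_iff.mp h)
      have h' : ¬ ((f a : ℕ) % 2 ≠ (f b : ℕ) % 2) := this
      omega
  · rintro ⟨A, B, hd, hu, hcA, hcB, hclA, hclB, hno⟩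
    rw [ncard_edgeSet]
    have := partition_count G hd hu hclA hclB hno
    rw [hcA, hcB] at this
    exact nat_rev n #G.edgeFinset hn this
end

section
/- Every connected [4,2]-graph of order n ≥ 8 has at least ⌊(n−1)²/4⌋ + 1 edges, with equality if and only if G is the barbell graph B_n, obtained from the disjoint union K_{⌊n/2⌋} + K_{⌈n/2⌉} by adding a single edge between the two complete graphs. -/
open SimpleGraph

/-!
Pass to the complement `H = Gᶜ`. The `[4,2]` condition says that `H` is diamond-free (two
adjacent vertices have at most one common neighbour), and connectivity of `G` says that no
complete bipartite graph spans `H`. As `e(G) + e(H) = C(n,2) = ⌊(n-1)²/4⌋ + ⌊n²/4⌋`, the claim is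
`e(H) ≤ ⌊n²/4⌋ - 1`, with equality only for `K_{⌊n/2⌋,⌈n/2⌉}` minus an edge.

If `H` contains a triangle, its three vertices cover at most `n` edges, and deleting them and
bounding the rest by induction gives `e(H) ≤ ⌊n²/4⌋ - 2`. If `H` is triangle-free, Mantel's
argument from a vertex `v` of maximum degree `Δ` gives `e(H) ≤ (n - Δ) Δ ≤ ⌊n²/4⌋`; near-equality
makes the non-neighbours of `v` independent, so `H` is bipartite between the neighbours of `v` and
the rest, with at least one cross pair missing.

Edges are counted as ordered pairs: `#(H.interedges S S)` is twice the number of edges inside `S`.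
-/

open Finset

namespace Nat

lemma two_mul_sq_div_four (k : ℕ) : (2 * k) ^ 2 / 4 = k ^ 2 := by
  rw [mul_pow]; norm_num

lemma two_mul_add_one_sq_div_four (k : ℕ) : (2 * k + 1) ^ 2 / 4 = k ^ 2 + k := by
  rw [show (2 * k + 1) ^ 2 = 1 + 4 * (k ^ 2 + k) by ring, Nat.add_mul_div_left _ _ (by norm_num)]
  norm_num

lemma sub_mul_le_sq_div_four (n d : ℕ) : (n - d) * d ≤ n ^ 2 / 4 := by
  rcases le_or_gt d n with hd | hd
  · obtain ⟨m, rfl⟩ := Nat.exists_eq_add_of_le hd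
    rw [Nat.le_div_iff_mul_le (by norm_num), Nat.add_sub_cancel_left]
    nlinarith [sq_nonneg ((d : ℤ) - m)]
  · simp [Nat.sub_eq_zero_of_le hd.le]

lemma eq_div_two_of_sub_mul_eq {n d : ℕ} (hd : d ≤ n) (h : (n - d) * d = n ^ 2 / 4) :
    d = n / 2 ∨ d = (n + 1) / 2 := by
  obtain ⟨k, rfl | rfl⟩ := n.even_or_odd'
  · rw [two_mul_sq_div_four] at h
    have h' : ((d : ℤ) - k) ^ 2 = 0 := by
      zify [hd] at h
      linear_combination -h
    have := pow_eq_zero_iff (n := 2) (by norm_num) |>.mp h'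
    omega
  · rw [two_mul_add_one_sq_div_four] at h
    have h' : ((d : ℤ) - k) * ((d : ℤ) - k - 1) = 0 := by
      zify [hd] at h
      linear_combination -h
    rcases _root_.mul_eq_zero.mp h' with h'' | h'' <;> omega

lemma div_two_mul_add_one_div_two (n : ℕ) : n / 2 * ((n + 1) / 2) = n ^ 2 / 4 := by
  obtain ⟨k, rfl | rfl⟩ := n.even_or_odd'
  · rw [two_mul_sq_div_four, show (2 * k + 1) / 2 = k by omega, show 2 * k / 2 = k by omega, sq]
  · rw [two_mul_add_one_sq_div_four, show (2 * k + 1 + 1) / 2 = k + 1 by omega,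
      show (2 * k + 1) / 2 = k by omega]
    ring

lemma sub_one_sq_div_four_add_sq_div_four (n : ℕ) : (n - 1) ^ 2 / 4 + n ^ 2 / 4 = n.choose 2 := by
  rw [Nat.choose_two_right]
  obtain ⟨k, rfl | rfl⟩ := n.even_or_odd'
  · rcases k with _ | k
    · rfl
    rw [show 2 * (k + 1) - 1 = 2 * k + 1 by omega, two_mul_add_one_sq_div_four,
      two_mul_sq_div_four, show 2 * (k + 1) * (2 * k + 1) = 2 * ((k + 1) * (2 * k + 1)) by ring,
      Nat.mul_div_cancel_left _ (by norm_num)]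
    ring
  · rw [Nat.add_sub_cancel, two_mul_add_one_sq_div_four, two_mul_sq_div_four,
      show (2 * k + 1) * (2 * k) = 2 * ((2 * k + 1) * k) by ring,
      Nat.mul_div_cancel_left _ (by norm_num)]
    ring

end Nat

/-- The maximal number of edges of a diamond-free graph on `m` vertices: Mantel's bound, except
for the triangle. -/
def diamondFreeBound (m : ℕ) : ℕ := if m = 3 then 3 else m ^ 2 / 4

lemma sq_div_four_le_diamondFreeBound (m : ℕ) : m ^ 2 / 4 ≤ diamondFreeBound m := by
  unfold diamondFreeBound
  split_ifs with h
  · subst h; norm_num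
  · rfl

lemma diamondFreeBound_of_ne {m : ℕ} (h : m ≠ 3) : diamondFreeBound m = m ^ 2 / 4 := if_neg h

lemma diamondFreeBound_sub_three_add_add_two_le {n : ℕ} (hn : 8 ≤ n) :
    diamondFreeBound (n - 3) + n + 2 ≤ n ^ 2 / 4 := by
  rw [diamondFreeBound_of_ne (by omega)]
  obtain ⟨k, rfl | rfl⟩ := n.even_or_odd'
  · rw [show 2 * k - 3 = 2 * (k - 2) + 1 by omega, Nat.two_mul_add_one_sq_div_four,
      Nat.two_mul_sq_div_four]
    obtain ⟨j, rfl⟩ := Nat.exists_eq_add_of_le (show 2 ≤ k by omega)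
    rw [Nat.add_sub_cancel_left]
    nlinarith
  · rw [show 2 * k + 1 - 3 = 2 * (k - 1) by omega, Nat.two_mul_add_one_sq_div_four,
      Nat.two_mul_sq_div_four]
    obtain ⟨j, rfl⟩ := Nat.exists_eq_add_of_le (show 1 ≤ k by omega)
    rw [Nat.add_sub_cancel_left]
    nlinarith

lemma diamondFreeBound_sub_three_add_le {m : ℕ} (hm : 3 ≤ m) :
    diamondFreeBound (m - 3) + m ≤ diamondFreeBound m := by
  rcases lt_or_ge m 8 with h | h
  · interval_cases m <;> decide
  · have := diamondFreeBound_sub_three_add_add_two_le h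
    rw [diamondFreeBound_of_ne (m := m) (by omega)]
    omega

lemma Finset.card_add_card_add_card_le {α : Type*} [DecidableEq α] (a b c : Finset α) :
    #a + #b + #c ≤ #(a ∪ b ∪ c) + #(a ∩ b) + #(a ∩ c) + #(b ∩ c) := by
  have hab := card_union_add_card_inter a b
  have habc := card_union_add_card_inter (a ∪ b) c
  have hc : #((a ∪ b) ∩ c) ≤ #(a ∩ c) + #(b ∩ c) := by
    rw [union_inter_distrib_right]
    exact card_union_le _ _
  omega

namespace SimpleGraph

variable {V : Type*}

section Counting

variable (H : SimpleGraph V) [DecidableRel H.Adj]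

def neighborsIn (S : Finset V) (v : V) : Finset V := {w ∈ S | H.Adj v w}

def degreeIn (S : Finset V) (v : V) : ℕ := #(H.neighborsIn S v)

variable {H} {S T : Finset V}

lemma neighborsIn_subset (S : Finset V) (v : V) : H.neighborsIn S v ⊆ S := filter_subset _ _

lemma degreeIn_le_card (S : Finset V) (v : V) : H.degreeIn S v ≤ #S :=
  card_le_card (neighborsIn_subset S v)

lemma card_interedges_eq_sum_degreeIn (S T : Finset V) :
    #(H.interedges S T) = ∑ v ∈ S, H.degreeIn T v := by
  simp only [interedges_def, degreeIn, neighborsIn, card_filter, sum_product]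

lemma card_interedges_comm (S T : Finset V) :
    #(H.interedges S T) = #(H.interedges T S) :=
  have := H.symm
  Rel.card_interedges_comm S T

lemma card_interedges_univ [Fintype V] : #(H.interedges univ univ) = 2 * #H.edgeFinset := by
  rw [card_interedges_eq_sum_degreeIn, ← sum_degrees_eq_twice_card_edges]
  refine sum_congr rfl fun v _ => ?_
  rw [degreeIn, neighborsIn, ← card_neighborFinset_eq_degree, neighborFinset_eq_filter]

lemma card_interedges_self_eq_zero (h : H.IsIndepSet (S : Set V)) :
    #(H.interedges S S) = 0 := by
  simp only [card_eq_zero, eq_empty_iff_forall_notMem, Prod.forall, mk_mem_interedges_iff]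
  exact fun x y ⟨hx, hy, hxy⟩ => h hx hy hxy.ne hxy

lemma card_interedges_lt_mul {x y : V} (hx : x ∈ S) (hy : y ∈ T) (hxy : ¬H.Adj x y) :
    #(H.interedges S T) < #S * #T := by
  rw [← card_product]
  refine card_lt_card ((ssubset_iff_of_subset (filter_subset _ _)).mpr
    ⟨(x, y), mem_product.mpr ⟨hx, hy⟩, fun h => hxy (H.mk_mem_interedges_iff.mp h).2.2⟩)

variable [DecidableEq V]

lemma degreeIn_union (h : Disjoint S T) (v : V) :
    H.degreeIn (S ∪ T) v = H.degreeIn S v + H.degreeIn T v := by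
  rw [degreeIn, neighborsIn, filter_union, card_union_of_disjoint (disjoint_filter_filter h)]
  rfl

lemma card_interedges_union_left (h : Disjoint S T) (U : Finset V) :
    #(H.interedges (S ∪ T) U) = #(H.interedges S U) + #(H.interedges T U) := by
  simp only [card_interedges_eq_sum_degreeIn, sum_union h]

lemma card_interedges_union_right (U : Finset V) (h : Disjoint S T) :
    #(H.interedges U (S ∪ T)) = #(H.interedges U S) + #(H.interedges U T) := by
  rw [card_interedges_comm, card_interedges_union_left h, card_interedges_comm S,
    card_interedges_comm T]

lemma card_interedges_union_self (h : Disjoint S T) :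
    #(H.interedges (S ∪ T) (S ∪ T)) =
      #(H.interedges S S) + #(H.interedges T T) + 2 * #(H.interedges S T) := by
  rw [card_interedges_union_left h, card_interedges_union_right _ h,
    card_interedges_union_right _ h, card_interedges_comm T S]
  ring

lemma card_interedges_add_card_interedges_of_subset (hT : T ⊆ S) :
    #(H.interedges S S) + #(H.interedges T T) =
      #(H.interedges (S \ T) (S \ T)) + 2 * ∑ t ∈ T, H.degreeIn S t := by
  have hS := sdiff_union_of_subset hT
  have hdeg : ∑ t ∈ T, H.degreeIn S t = #(H.interedges T (S \ T)) + #(H.interedges T T) := by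
    rw [← card_interedges_eq_sum_degreeIn, ← card_interedges_union_right _ sdiff_disjoint, hS]
  rw [hdeg]
  conv_lhs => rw [← hS, card_interedges_union_self sdiff_disjoint]
  rw [card_interedges_comm (S \ T) T]
  ring

lemma IsClique.card_interedges_self (h : H.IsClique (T : Set V)) :
    #(H.interedges T T) = #T * (#T - 1) := by
  have hdeg : ∀ t ∈ T, H.degreeIn T t = #T - 1 := fun t ht => by
    rw [degreeIn, ← card_erase_of_mem ht]
    congr 1
    ext w
    simp only [neighborsIn, mem_filter, mem_erase]
    exact ⟨fun ⟨hw, htw⟩ => ⟨htw.ne', hw⟩, fun ⟨hwt, hw⟩ => ⟨hw, h ht hw hwt.symm⟩⟩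
  rw [card_interedges_eq_sum_degreeIn, sum_congr rfl hdeg, sum_const, smul_eq_mul]

lemma card_edgeFinset_add_card_edgeFinset_compl [Fintype V] :
    #H.edgeFinset + #Hᶜ.edgeFinset = (Fintype.card V).choose 2 := by
  rw [← card_union_of_disjoint (disjoint_edgeFinset.mpr disjoint_compl_right), ← edgeFinset_sup,
    ← card_edgeFinset_top_eq_card_choose_two]
  congr! 2
  exact sup_compl_eq_top

end Counting

section DiamondFree

/-- Equivalently: `H` has no subgraph isomorphic to `K₄` minus an edge. -/
def DiamondFree (H : SimpleGraph V) : Prop :=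
  ∀ ⦃a b : V⦄, H.Adj a b → (H.commonNeighbors a b).Subsingleton

variable [DecidableEq V]

lemma diamondFree_compl_of_isSTGraph [Fintype V] {G : SimpleGraph V} (h : IsSTGraph G 4 2) :
    Gᶜ.DiamondFree := by
  intro a b hab c hc d hd
  by_contra hcd
  simp only [mem_commonNeighbors, compl_adj] at hab hc hd
  have hcard : #({a, b, c, d} : Finset V) = 4 := by
    rw [card_insert_of_notMem (by simp [hab.1, hc.1.1, hd.1.1]),
      card_insert_of_notMem (by simp [hc.2.1, hd.2.1]),
      card_insert_of_notMem (by simpa using hcd), card_singleton]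
  have hle : edgesWithin G {a, b, c, d} ≤ 1 := by
    refine (Set.ncard_le_ncard (t := {s(c, d)}) ?_).trans (Set.ncard_singleton _).le
    rintro e ⟨he, hS⟩
    induction e using Sym2.ind with
    | _ x y =>
      have hx := hS x (Sym2.mem_mk_left x y)
      have hy := hS y (Sym2.mem_mk_right x y)
      simp only [mem_insert, mem_singleton] at hx hy
      rw [mem_edgeSet] at he
      rcases hx with rfl | rfl | rfl | rfl <;> rcases hy with rfl | rfl | rfl | rfl <;>
        simp_all [adj_comm, Sym2.eq_swap]
  have := h.2 _ hcard
  omega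

variable {H : SimpleGraph V} [DecidableRel H.Adj] {S T : Finset V}

lemma DiamondFree.card_inter_neighborsIn_le_one (hH : H.DiamondFree) {a b : V} (hab : H.Adj a b)
    (S : Finset V) : #(H.neighborsIn S a ∩ H.neighborsIn S b) ≤ 1 :=
  card_le_one.mpr fun x hx y hy => by
    simp only [neighborsIn, mem_inter, mem_filter] at hx hy
    exact hH hab ⟨hx.1.2, hx.2.2⟩ ⟨hy.1.2, hy.2.2⟩

/-- Two vertices of a triangle share no neighbour besides the third one. -/
lemma DiamondFree.degreeIn_add_degreeIn_add_degreeIn_le (hH : H.DiamondFree) {x y z : V}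
    (hxy : H.Adj x y) (hxz : H.Adj x z) (hyz : H.Adj y z) (S : Finset V) :
    H.degreeIn S x + H.degreeIn S y + H.degreeIn S z ≤ #S + 3 := by
  have hunion : #(H.neighborsIn S x ∪ H.neighborsIn S y ∪ H.neighborsIn S z) ≤ #S :=
    card_le_card (union_subset (union_subset (neighborsIn_subset S x) (neighborsIn_subset S y))
      (neighborsIn_subset S z))
  have := card_add_card_add_card_le (H.neighborsIn S x) (H.neighborsIn S y) (H.neighborsIn S z)
  have := hH.card_inter_neighborsIn_le_one hxy S
  have := hH.card_inter_neighborsIn_le_one hxz S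
  have := hH.card_inter_neighborsIn_le_one hyz S
  simp only [degreeIn]
  omega

lemma DiamondFree.card_interedges_le_of_isNClique (hH : H.DiamondFree) (hT : H.IsNClique 3 T)
    (hTS : T ⊆ S) :
    #(H.interedges S S) ≤ #(H.interedges (S \ T) (S \ T)) + 2 * #S := by
  have hsplit := card_interedges_add_card_interedges_of_subset (H := H) hTS
  rw [hT.1.card_interedges_self, hT.card_eq] at hsplit
  obtain ⟨x, y, z, hxy, hxz, hyz, rfl⟩ := is3Clique_iff.mp hT
  rw [sum_insert (by simp [hxy.ne, hxz.ne]), sum_pair hyz.ne] at hsplit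
  have := hH.degreeIn_add_degreeIn_add_degreeIn_le hxy hxz hyz S
  omega

end DiamondFree

section TriangleFree

variable [DecidableEq V] {H : SimpleGraph V} [DecidableRel H.Adj] {S : Finset V} {v x y : V}

lemma degreeIn_add_degreeIn_le_card_interedges (hx : x ∈ S) (hy : y ∈ S) (hxy : x ≠ y) :
    H.degreeIn S x + H.degreeIn S y ≤ #(H.interedges S S) := by
  rw [card_interedges_eq_sum_degreeIn, ← sum_pair hxy]
  exact sum_le_sum_of_subset (insert_subset hx (singleton_subset_iff.mpr hy))

lemma CliqueFree.degreeIn_add_degreeIn_le (h3 : H.CliqueFree 3) (hxy : H.Adj x y)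
    (S : Finset V) : H.degreeIn S x + H.degreeIn S y ≤ #S := by
  rw [degreeIn, degreeIn, ← card_union_of_disjoint]
  · exact card_le_card (union_subset (neighborsIn_subset S x) (neighborsIn_subset S y))
  · rw [Finset.disjoint_left]
    intro w hwx hwy
    simp only [neighborsIn, mem_filter] at hwx hwy
    exact h3 _ (is3Clique_triple_iff.mpr ⟨hxy, hwx.2, hwy.2⟩)

lemma isIndepSet_neighborsIn (h : ∀ T ⊆ S, ¬H.IsNClique 3 T) (hv : v ∈ S) :
    H.IsIndepSet (H.neighborsIn S v : Set V) := by
  intro x hx y hy _ hxy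
  simp only [neighborsIn, mem_coe, mem_filter] at hx hy
  exact h {v, x, y} (insert_subset hv (insert_subset hx.1 (singleton_subset_iff.mpr hy.1)))
    (is3Clique_triple_iff.mpr ⟨hx.2, hy.2, hxy⟩)

lemma card_interedges_add_card_interedges_sdiff_neighborsIn (h : ∀ T ⊆ S, ¬H.IsNClique 3 T)
    (hv : v ∈ S) :
    #(H.interedges S S) + #(H.interedges (S \ H.neighborsIn S v) (S \ H.neighborsIn S v)) =
      2 * ∑ u ∈ S \ H.neighborsIn S v, H.degreeIn S u := by
  have := card_interedges_add_card_interedges_of_subset (H := H) (sdiff_subset (s := S)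
    (t := H.neighborsIn S v))
  rwa [Finset.sdiff_sdiff_eq_self (neighborsIn_subset S v),
    card_interedges_self_eq_zero (isIndepSet_neighborsIn h hv), zero_add] at this

lemma sum_degreeIn_sdiff_neighborsIn_le (hmax : ∀ u ∈ S, H.degreeIn S u ≤ H.degreeIn S v) :
    ∑ u ∈ S \ H.neighborsIn S v, H.degreeIn S u ≤ (#S - H.degreeIn S v) * H.degreeIn S v := by
  rw [degreeIn, ← card_sdiff_of_subset (neighborsIn_subset S v), ← smul_eq_mul]
  exact sum_le_card_nsmul _ _ _ fun u hu => hmax u (mem_sdiff.mp hu).1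

/-- Mantel's theorem. -/
theorem card_interedges_self_le_of_forall_not_isNClique (h : ∀ T ⊆ S, ¬H.IsNClique 3 T) :
    #(H.interedges S S) ≤ 2 * (#S ^ 2 / 4) := by
  rcases S.eq_empty_or_nonempty with rfl | hS
  · simp
  obtain ⟨v, hv, hmax⟩ := exists_max_image S (H.degreeIn S) hS
  have := card_interedges_add_card_interedges_sdiff_neighborsIn h hv
  have := sum_degreeIn_sdiff_neighborsIn_le hmax
  have := Nat.sub_mul_le_sq_div_four #S (H.degreeIn S v)
  omega

variable [Fintype V]

/-- Near-equality in Mantel's bound forces the non-neighbours of a vertex of maximum degree to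
be independent: an edge `xy` among them would leave `x` and `y` too few neighbours. -/
lemma CliqueFree.isIndepSet_compl_neighborsIn (h3 : H.CliqueFree 3)
    (hmax : ∀ u, H.degreeIn univ u ≤ H.degreeIn univ v) (hn : 6 ≤ Fintype.card V)
    (he : 2 * (Fintype.card V ^ 2 / 4) ≤ #(H.interedges univ univ) + 2) :
    H.IsIndepSet (((H.neighborsIn univ v)ᶜ : Finset V) : Set V) := by
  intro x hx y hy hxy hadj
  rw [mem_coe] at hx hy
  have hsplit := card_interedges_add_card_interedges_sdiff_neighborsIn (H := H)
    (fun T _ => h3 T) (mem_univ v)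
  have hsum := sum_degreeIn_sdiff_neighborsIn_le (v := v) (fun u _ => hmax u)
  rw [← compl_eq_univ_sdiff] at hsplit hsum
  rw [card_univ] at hsum
  have hq := Nat.sub_mul_le_sq_div_four (Fintype.card V) (H.degreeIn univ v)
  set A := H.neighborsIn univ v
  set Δ := H.degreeIn univ v
  have hΔ : #A = Δ := rfl
  have hxB : 1 ≤ H.degreeIn Aᶜ x := card_pos.mpr ⟨y, mem_filter.mpr ⟨hy, hadj⟩⟩
  have hyB : 1 ≤ H.degreeIn Aᶜ y := card_pos.mpr ⟨x, mem_filter.mpr ⟨hx, hadj.symm⟩⟩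
  have hB := degreeIn_add_degreeIn_le_card_interedges (H := H) hx hy hxy
  have hexact : (Fintype.card V - Δ) * Δ = Fintype.card V ^ 2 / 4 := by omega
  have hsum_eq : ∑ u ∈ Aᶜ, H.degreeIn univ u = ∑ _u ∈ Aᶜ, Δ := by
    rw [sum_const, smul_eq_mul, card_compl, hΔ]
    omega
  have hdeg := (sum_eq_sum_iff_of_le fun u _ => hmax u).mp hsum_eq
  have hunion : ∀ u, H.degreeIn univ u = H.degreeIn A u + H.degreeIn Aᶜ u := fun u => by
    rw [← degreeIn_union disjoint_compl_right, union_compl]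
  have hA := h3.degreeIn_add_degreeIn_le hadj A
  have hbal := Nat.eq_div_two_of_sub_mul_eq (by simpa using H.degreeIn_le_card univ v) hexact
  have := hunion x
  have := hunion y
  have := hdeg x hx
  have := hdeg y hy
  omega

theorem CliqueFree.exists_isIndepSet_of_card_interedges (h3 : H.CliqueFree 3)
    (hcut : ∀ A : Finset V, A.Nonempty → Aᶜ.Nonempty → ∃ a ∈ A, ∃ b ∉ A, ¬H.Adj a b)
    (hn : 6 ≤ Fintype.card V)
    (he : 2 * (Fintype.card V ^ 2 / 4) ≤ #(H.interedges univ univ) + 2) :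
    #(H.interedges univ univ) + 2 = 2 * (Fintype.card V ^ 2 / 4) ∧
      ∃ A B : Finset V, Disjoint A B ∧ A ∪ B = univ ∧ #A = Fintype.card V / 2 ∧
        #B = (Fintype.card V + 1) / 2 ∧ H.IsIndepSet (A : Set V) ∧ H.IsIndepSet (B : Set V) ∧
        #(H.interedges A B) + 1 = #A * #B := by
  have hV : Nonempty V := Fintype.card_pos_iff.mp (by omega)
  obtain ⟨v, -, hmax⟩ := exists_max_image univ (H.degreeIn univ) univ_nonempty
  set A := H.neighborsIn univ v
  have hA : H.IsIndepSet (A : Set V) := isIndepSet_neighborsIn (fun T _ => h3 T) (mem_univ v)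
  have hB : H.IsIndepSet ((Aᶜ : Finset V) : Set V) :=
    h3.isIndepSet_compl_neighborsIn (fun u => hmax u (mem_univ u)) hn he
  have hsplit := card_interedges_union_self (H := H) (disjoint_compl_right (a := A))
  rw [union_compl, card_interedges_self_eq_zero hA, card_interedges_self_eq_zero hB] at hsplit
  have hvB : v ∈ Aᶜ := by simp [A, neighborsIn]
  have hAne : A.Nonempty := by
    by_contra hA0
    rw [not_nonempty_iff_eq_empty.mp hA0, interedges_empty_left, card_empty] at hsplit
    have := Nat.div_le_div_right (c := 4) (Nat.pow_le_pow_left hn 2)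
    omega
  obtain ⟨a, ha, b, hb, hab⟩ := hcut A hAne ⟨v, hvB⟩
  have hlt := card_interedges_lt_mul ha (mem_compl.mpr hb) hab
  have hq : #A * #Aᶜ ≤ Fintype.card V ^ 2 / 4 := by
    rw [card_compl, mul_comm]
    exact Nat.sub_mul_le_sq_div_four _ _
  have hbal := Nat.eq_div_two_of_sub_mul_eq (card_le_univ A)
    (by rw [← card_compl, mul_comm]; omega)
  refine ⟨by omega, ?_⟩
  rcases hbal with hbal | hbal
  · exact ⟨A, Aᶜ, disjoint_compl_right, union_compl A, hbal, by rw [card_compl]; omega, hA, hB,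
      by omega⟩
  · refine ⟨Aᶜ, A, disjoint_compl_left, by rw [union_comm, union_compl],
      by rw [card_compl]; omega, hbal, hB, hA, ?_⟩
    rw [card_interedges_comm, mul_comm]
    omega

end TriangleFree

lemma Connected.exists_adj_of_nonempty_compl {G : SimpleGraph V} (hG : G.Connected) {s : Set V}
    (hs : s.Nonempty) (hsc : sᶜ.Nonempty) : ∃ a ∈ s, ∃ b ∉ s, G.Adj a b := by
  obtain ⟨a, ha⟩ := hs
  obtain ⟨b, hb⟩ := hsc
  obtain ⟨d, -, hd₁, hd₂⟩ := (hG.preconnected a b).some.exists_boundary_dart s ha hb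
  exact ⟨d.fst, hd₁, d.snd, hd₂, d.adj⟩

section Extremal

variable [DecidableEq V] {H : SimpleGraph V} [DecidableRel H.Adj]

theorem DiamondFree.card_interedges_self_le (hH : H.DiamondFree) (S : Finset V) :
    #(H.interedges S S) ≤ 2 * diamondFreeBound #S := by
  induction S using Finset.strongInduction with
  | H S ih =>
    by_cases htri : ∃ T ⊆ S, H.IsNClique 3 T
    · obtain ⟨T, hTS, hT⟩ := htri
      have hT3 := hT.card_eq
      have h3 : 3 ≤ #S := hT3 ▸ card_le_card hTS
      have hcard : #(S \ T) = #S - 3 := by rw [card_sdiff_of_subset hTS, hT3]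
      have := ih (S \ T) (sdiff_ssubset hTS (card_pos.mp (by omega)))
      have := hH.card_interedges_le_of_isNClique hT hTS
      have := diamondFreeBound_sub_three_add_le h3
      rw [hcard] at *
      omega
    · push Not at htri
      have := card_interedges_self_le_of_forall_not_isNClique htri
      have := sq_div_four_le_diamondFreeBound #S
      omega

lemma existsUnique_adj_iff_card_interedges_compl {G : SimpleGraph V} [DecidableRel G.Adj]
    {A B : Finset V} (h : Disjoint A B) :
    (∃! p : V × V, p.1 ∈ A ∧ p.2 ∈ B ∧ G.Adj p.1 p.2) ↔ #(Gᶜ.interedges A B) + 1 = #A * #B := by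
  have := G.card_interedges_add_card_interedges_compl h
  simp_rw [← mem_interedges_iff, ← card_eq_one_iff_existsUnique]
  omega

variable [Fintype V]

theorem DiamondFree.card_edgeFinset_add_one_le (hH : H.DiamondFree)
    (hcut : ∀ A : Finset V, A.Nonempty → Aᶜ.Nonempty → ∃ a ∈ A, ∃ b ∉ A, ¬H.Adj a b)
    (hn : 8 ≤ Fintype.card V) :
    #H.edgeFinset + 1 ≤ Fintype.card V ^ 2 / 4 ∧
      (#H.edgeFinset + 1 = Fintype.card V ^ 2 / 4 →
        ∃ A B : Finset V, Disjoint A B ∧ A ∪ B = univ ∧ #A = Fintype.card V / 2 ∧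
          #B = (Fintype.card V + 1) / 2 ∧ H.IsIndepSet (A : Set V) ∧
          H.IsIndepSet (B : Set V) ∧ #(H.interedges A B) + 1 = #A * #B) := by
  rw [← Nat.mul_le_mul_left_iff (show 0 < 2 by norm_num), mul_add, ← card_interedges_univ]
  by_cases h3 : H.CliqueFree 3
  · by_cases he : 2 * (Fintype.card V ^ 2 / 4) ≤ #(H.interedges univ univ) + 2
    · obtain ⟨heq, hAB⟩ := h3.exists_isIndepSet_of_card_interedges hcut (by omega) he
      exact ⟨heq.le, fun _ => hAB⟩
    · refine ⟨by omega, fun h => ?_⟩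
      rw [card_interedges_univ] at he
      omega
  · obtain ⟨T, hT⟩ : ∃ T, H.IsNClique 3 T := by simpa [CliqueFree] using h3
    have hcard : #(univ \ T) = Fintype.card V - 3 := by
      rw [card_sdiff_of_subset (subset_univ T), hT.card_eq, card_univ]
    have := hH.card_interedges_le_of_isNClique hT (subset_univ T)
    have := hH.card_interedges_self_le (univ \ T)
    have := diamondFreeBound_sub_three_add_add_two_le hn
    rw [hcard, card_univ] at *
    refine ⟨by omega, fun h => ?_⟩
    rw [card_interedges_univ] at *
    omega

lemma card_interedges_univ_of_isIndepSet {A B : Finset V} (h : Disjoint A B) (hAB : A ∪ B = univ)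
    (hA : H.IsIndepSet (A : Set V)) (hB : H.IsIndepSet (B : Set V)) :
    #(H.interedges univ univ) = 2 * #(H.interedges A B) := by
  rw [← hAB, card_interedges_union_self h, card_interedges_self_eq_zero hA,
    card_interedges_self_eq_zero hB, zero_add, zero_add]

end Extremal

end SimpleGraph

/-- Every connected [4,2]-graph of order n ≥ 8 has at least ⌊(n-1)²/4⌋ + 1 edges,
with equality iff G is the barbell graph B_n. -/
theorem stmt_12 {V : Type*} [Fintype V] [DecidableEq V] (G : SimpleGraph V)
    (h42 : IsSTGraph G 4 2) (hconn : G.Connected) (hn : 8 ≤ Fintype.card V) :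
    (Fintype.card V - 1) ^ 2 / 4 + 1 ≤ G.edgeSet.ncard ∧
      (G.edgeSet.ncard = (Fintype.card V - 1) ^ 2 / 4 + 1 ↔
        ∃ A B : Finset V, Disjoint A B ∧ A ∪ B = Finset.univ ∧
          A.card = Fintype.card V / 2 ∧ B.card = (Fintype.card V + 1) / 2 ∧
          G.IsClique (A : Set V) ∧ G.IsClique (B : Set V) ∧
          ∃! p : V × V, p.1 ∈ A ∧ p.2 ∈ B ∧ G.Adj p.1 p.2) := by
  classical
  have hcut (A : Finset V) (hA : A.Nonempty) (hAc : Aᶜ.Nonempty) :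
      ∃ a ∈ A, ∃ b ∉ A, ¬Gᶜ.Adj a b := by
    obtain ⟨a, ha, b, hb, hab⟩ :=
      hconn.exists_adj_of_nonempty_compl (s := A) hA (by simpa [← coe_compl] using hAc)
    exact ⟨a, ha, b, hb, fun h => (compl_adj G a b).mp h |>.2 hab⟩
  obtain ⟨hle, hextremal⟩ :=
    (diamondFree_compl_of_isSTGraph h42).card_edgeFinset_add_one_le hcut hn
  have hsum := G.card_edgeFinset_add_card_edgeFinset_compl
  have harith := Nat.sub_one_sq_div_four_add_sq_div_four (Fintype.card V)
  rw [← coe_edgeFinset, Set.ncard_coe_finset]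
  refine ⟨by omega, fun heq => ?_, ?_⟩
  · obtain ⟨A, B, hd, hu, hA, hB, hiA, hiB, hAB⟩ := hextremal (by omega)
    exact ⟨A, B, hd, hu, hA, hB, (isIndepSet_compl G).mp hiA, (isIndepSet_compl G).mp hiB,
      (existsUnique_adj_iff_card_interedges_compl hd).mpr hAB⟩
  · rintro ⟨A, B, hd, hu, hA, hB, hcA, hcB, huniq⟩
    have hAB := (existsUnique_adj_iff_card_interedges_compl hd).mp huniq
    have := card_interedges_univ_of_isIndepSet hd hu ((isIndepSet_compl G).mpr hcA)
      ((isIndepSet_compl G).mpr hcB)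
    have := Nat.div_two_mul_add_one_div_two (Fintype.card V)
    rw [card_interedges_univ, ← hA, ← hB] at *
    omega
end
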